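/- arXiv:1904.01163 — 10 statements merged into one kernel-verified Lean document; each statement's English description precedes it below -/
import Mathlib

section
/- There exists a positive integer t₀ such that for all integers t ≥ t₀ and n ≥ 3t − 1, every (pairwise) t-agreeing family F ⊆ [3]^n satisfies |F| ≤ 3^n · 3^(−t/10), where the right-hand side uses the real power 3^(−t/10). -/
open Finset

-- Sorted key lemma: x1 is the largest, x2 second, x3 smallest.
lemma key_sorted (D x1 x2 x3 y1 y2 y3 : ℝ) (hD : 0 ≤ D)
    (hx1 : 0 ≤ x1) (hx2 : 0 ≤ x2) (hx3 : 0 ≤ x3)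
    (hy1 : 0 ≤ y1) (hy2 : 0 ≤ y2) (hy3 : 0 ≤ y3)
    (h21 : x2 ≤ x1) (h32 : x3 ≤ x2)
    (d1 : x1 * y1 ≤ 4 * D)
    (o12 : x1 * y2 ≤ D) (o13 : x1 * y3 ≤ D)
    (o21 : x2 * y1 ≤ D) :
    (x1 + x2 + x3) * (y1 + y2 + y3) ≤ 9 * D := by
  rcases eq_or_lt_of_le hx1 with h | hx1pos
  · -- x1 = 0, hence all x are 0
    have hx2' : x2 = 0 := le_antisymm (h ▸ h21) hx2
    have hx3' : x3 = 0 := le_antisymm (hx2' ▸ h32) hx3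
    rw [← h, hx2', hx3']
    nlinarith
  · rcases le_or_gt x1 (4 * x2) with hB | hA
    · -- Case B: x1 ≤ 4 x2, so x2 > 0
      have hx2pos : 0 < x2 := by linarith
      have e21 : x1 * (x2 * y1) ≤ x1 * D := mul_le_mul_of_nonneg_left o21 hx1
      have e12 : x2 * (x1 * y2) ≤ x2 * D := mul_le_mul_of_nonneg_left o12 hx2
      have e13 : x2 * (x1 * y3) ≤ x2 * D := mul_le_mul_of_nonneg_left o13 hx2
      have t1 : x1 * x2 * (y1 + y2 + y3) ≤ (x1 + 2 * x2) * D := by nlinarith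
      have hXs : 0 ≤ x1 + x2 + x3 := by linarith
      have hX2 : x1 + x2 + x3 ≤ x1 + 2 * x2 := by linarith
      have hRD : 0 ≤ (x1 + 2 * x2) * D := by
        apply mul_nonneg (by linarith) hD
      have t4 : (x1 + x2 + x3) * (x1 * x2 * (y1 + y2 + y3))
          ≤ (x1 + 2 * x2) * ((x1 + 2 * x2) * D) :=
        le_trans (mul_le_mul_of_nonneg_left t1 hXs)
          (mul_le_mul_of_nonneg_right hX2 hRD)
      have hq : 0 ≤ (x1 - x2) * (4 * x2 - x1) * D :=
        mul_nonneg (mul_nonneg (by linarith) (by linarith)) hD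
      have hfin : (x1 * x2) * ((x1 + x2 + x3) * (y1 + y2 + y3))
          ≤ (x1 * x2) * (9 * D) := by nlinarith
      exact le_of_mul_le_mul_left hfin (mul_pos hx1pos hx2pos)
    · -- Case A: x1 > 4 x2
      have s1 : x1 * (y1 + y2 + y3) ≤ 6 * D := by nlinarith
      have s2 : x1 + x2 + x3 ≤ (3/2) * x1 := by linarith
      have hfin : x1 * ((x1 + x2 + x3) * (y1 + y2 + y3)) ≤ x1 * (9 * D) := by
        calc x1 * ((x1 + x2 + x3) * (y1 + y2 + y3))
            = (x1 + x2 + x3) * (x1 * (y1 + y2 + y3)) := by ring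
          _ ≤ (x1 + x2 + x3) * (6 * D) :=
              mul_le_mul_of_nonneg_left s1 (by linarith)
          _ ≤ ((3/2) * x1) * (6 * D) :=
              mul_le_mul_of_nonneg_right s2 (by linarith)
          _ = x1 * (9 * D) := by ring
      exact le_of_mul_le_mul_left hfin hx1pos

lemma key (D x1 x2 x3 y1 y2 y3 : ℝ) (hD : 0 ≤ D)
    (hx1 : 0 ≤ x1) (hx2 : 0 ≤ x2) (hx3 : 0 ≤ x3)
    (hy1 : 0 ≤ y1) (hy2 : 0 ≤ y2) (hy3 : 0 ≤ y3)
    (d1 : x1 * y1 ≤ 4 * D) (d2 : x2 * y2 ≤ 4 * D) (d3 : x3 * y3 ≤ 4 * D)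
    (o12 : x1 * y2 ≤ D) (o13 : x1 * y3 ≤ D)
    (o21 : x2 * y1 ≤ D) (o23 : x2 * y3 ≤ D)
    (o31 : x3 * y1 ≤ D) (o32 : x3 * y2 ≤ D) :
    (x1 + x2 + x3) * (y1 + y2 + y3) ≤ 9 * D := by
  rcases le_total x1 x2 with h12 | h12 <;>
    rcases le_total x1 x3 with h13 | h13 <;>
      rcases le_total x2 x3 with h23 | h23
  · -- x3 ≥ x2 ≥ x1
    calc (x1 + x2 + x3) * (y1 + y2 + y3) = (x3 + x2 + x1) * (y3 + y2 + y1) := by ring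
      _ ≤ 9 * D := key_sorted D x3 x2 x1 y3 y2 y1 hD hx3 hx2 hx1 hy3 hy2 hy1 h23 h12 d3 o32 o31 o23
  · -- x1≤x2, x1≤x3, x3≤x2 : x2 ≥ x3 ≥ x1
    calc (x1 + x2 + x3) * (y1 + y2 + y3) = (x2 + x3 + x1) * (y2 + y3 + y1) := by ring
      _ ≤ 9 * D := key_sorted D x2 x3 x1 y2 y3 y1 hD hx2 hx3 hx1 hy2 hy3 hy1 h23 h13 d2 o23 o21 o32
  · -- x1≤x2, x3≤x1, x2≤x3: x2 ≥ x1 ≥ x3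
    calc (x1 + x2 + x3) * (y1 + y2 + y3) = (x2 + x1 + x3) * (y2 + y1 + y3) := by ring
      _ ≤ 9 * D := key_sorted D x2 x1 x3 y2 y1 y3 hD hx2 hx1 hx3 hy2 hy1 hy3 h12 h13 d2 o21 o23 o12
  · -- x1≤x2, x3≤x1, x3≤x2: x2 ≥ x1 ≥ x3
    calc (x1 + x2 + x3) * (y1 + y2 + y3) = (x2 + x1 + x3) * (y2 + y1 + y3) := by ring
      _ ≤ 9 * D := key_sorted D x2 x1 x3 y2 y1 y3 hD hx2 hx1 hx3 hy2 hy1 hy3 h12 h13 d2 o21 o23 o12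
  · -- x2≤x1, x1≤x3, x2≤x3: x3 ≥ x1 ≥ x2
    calc (x1 + x2 + x3) * (y1 + y2 + y3) = (x3 + x1 + x2) * (y3 + y1 + y2) := by ring
      _ ≤ 9 * D := key_sorted D x3 x1 x2 y3 y1 y2 hD hx3 hx1 hx2 hy3 hy1 hy2 h13 h12 d3 o31 o32 o13
  · -- x2≤x1, x1≤x3, x3≤x2: degenerate, x3 ≥ x1 ≥ x2
    calc (x1 + x2 + x3) * (y1 + y2 + y3) = (x3 + x1 + x2) * (y3 + y1 + y2) := by ring
      _ ≤ 9 * D := key_sorted D x3 x1 x2 y3 y1 y2 hD hx3 hx1 hx2 hy3 hy1 hy2 h13 h12 d3 o31 o32 o13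
  · -- x2≤x1, x3≤x1, x2≤x3: x1 ≥ x3 ≥ x2
    calc (x1 + x2 + x3) * (y1 + y2 + y3) = (x1 + x3 + x2) * (y1 + y3 + y2) := by ring
      _ ≤ 9 * D := key_sorted D x1 x3 x2 y1 y3 y2 hD hx1 hx3 hx2 hy1 hy3 hy2 h13 h23 d1 o13 o12 o31
  · -- x1 ≥ x2 ≥ x3
    exact key_sorted D x1 x2 x3 y1 y2 y3 hD hx1 hx2 hx3 hy1 hy2 hy3 h12 h23 d1 o12 o13 o21

lemma agr_succ (n : ℕ) (a b : Fin (n+1) → Fin 3) :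
    (univ.filter (fun i : Fin (n+1) => a i = b i)).card
      = (if a 0 = b 0 then 1 else 0)
        + (univ.filter (fun i : Fin n => Fin.tail a i = Fin.tail b i)).card := by
  rw [Finset.card_filter, Finset.card_filter, Fin.sum_univ_succ]
  rfl

lemma cross_bound : ∀ (n t : ℕ) (A B : Finset (Fin n → Fin 3)),
    (∀ a ∈ A, ∀ b ∈ B, t ≤ (univ.filter (fun i => a i = b i)).card) →
    (A.card : ℝ) * B.card ≤ 9 ^ n * (1/4 : ℝ) ^ t := by
  intro n
  induction n with
  | zero =>
    intro t A B h
    have hA1 : A.card ≤ 1 := Finset.card_le_one.mpr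
      (fun a _ b _ => funext fun i => i.elim0)
    have hB1 : B.card ≤ 1 := Finset.card_le_one.mpr
      (fun a _ b _ => funext fun i => i.elim0)
    cases t with
    | zero =>
      simp only [pow_zero, mul_one]
      have h1 : (A.card : ℝ) ≤ 1 := by exact_mod_cast hA1
      have h2 : (B.card : ℝ) ≤ 1 := by exact_mod_cast hB1
      nlinarith [Nat.cast_nonneg (α := ℝ) A.card, Nat.cast_nonneg (α := ℝ) B.card]
    | succ t =>
      rcases A.eq_empty_or_nonempty with rfl | ⟨a, ha⟩
      · simp
      rcases B.eq_empty_or_nonempty with rfl | ⟨b, hb⟩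
      · simp
      exfalso
      have := h a ha b hb
      simp at this
  | succ n ih =>
    intro t A B h
    classical
    set tl : (Fin (n+1) → Fin 3) → (Fin n → Fin 3) := Fin.tail with htl
    -- fiber cross bound
    have main : ∀ c c' : Fin 3,
        ((A.filter fun a => a 0 = c).card : ℝ) * ((B.filter fun b => b 0 = c').card : ℝ)
          ≤ 9 ^ n * (1/4 : ℝ) ^ (if c = c' then t - 1 else t) := by
      intro c c'
      have hinjA : Set.InjOn tl ((A.filter fun a => a 0 = c) : Set _) := by
        intro a ha a' ha' htail
        simp only [coe_filter, Set.mem_setOf_eq] at ha ha'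
        rw [← Fin.cons_self_tail a, ← Fin.cons_self_tail a', ha.2, ha'.2]
        rw [htl] at htail
        rw [htail]
      have hinjB : Set.InjOn tl ((B.filter fun b => b 0 = c') : Set _) := by
        intro a ha a' ha' htail
        simp only [coe_filter, Set.mem_setOf_eq] at ha ha'
        rw [← Fin.cons_self_tail a, ← Fin.cons_self_tail a', ha.2, ha'.2]
        rw [htl] at htail
        rw [htail]
      rw [← Finset.card_image_of_injOn hinjA, ← Finset.card_image_of_injOn hinjB]
      apply ih
      intro a' ha' b' hb'
      obtain ⟨a, ha, rfl⟩ := Finset.mem_image.mp ha'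
      obtain ⟨b, hb, rfl⟩ := Finset.mem_image.mp hb'
      rw [Finset.mem_filter] at ha hb
      have hab := h a ha.1 b hb.1
      rw [agr_succ] at hab
      by_cases hcc : c = c'
      · simp only [if_pos hcc]
        have : a 0 = b 0 := by rw [ha.2, hb.2, hcc]
        rw [if_pos this] at hab
        rw [htl]
        omega
      · simp only [if_neg hcc]
        have : ¬ (a 0 = b 0) := by rw [ha.2, hb.2]; exact hcc
        rw [if_neg this] at hab
        rw [htl]
        omega
    -- sums
    have hAsum : (A.card : ℝ) = ((A.filter fun a => a 0 = 0).card : ℝ)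
        + ((A.filter fun a => a 0 = 1).card : ℝ) + ((A.filter fun a => a 0 = 2).card : ℝ) := by
      have := Finset.card_eq_sum_card_fiberwise
        (f := fun a : Fin (n+1) → Fin 3 => a 0) (t := (univ : Finset (Fin 3)))
        (s := A) (fun x _ => mem_univ _)
      rw [this, Fin.sum_univ_three]
      push_cast; ring
    have hBsum : (B.card : ℝ) = ((B.filter fun b => b 0 = 0).card : ℝ)
        + ((B.filter fun b => b 0 = 1).card : ℝ) + ((B.filter fun b => b 0 = 2).card : ℝ) := by
      have := Finset.card_eq_sum_card_fiberwise
        (f := fun a : Fin (n+1) → Fin 3 => a 0) (t := (univ : Finset (Fin 3)))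
        (s := B) (fun x _ => mem_univ _)
      rw [this, Fin.sum_univ_three]
      push_cast; ring
    set D : ℝ := 9 ^ n * (1/4 : ℝ) ^ t with hDdef
    have hD : 0 ≤ D := by positivity
    have hdiagbound : (9:ℝ) ^ n * (1/4 : ℝ) ^ (t - 1) ≤ 4 * D := by
      rw [hDdef]
      cases t with
      | zero => simp
      | succ t =>
        simp only [Nat.add_sub_cancel]
        rw [pow_succ]
        ring_nf
        nlinarith [pow_nonneg (by norm_num : (0:ℝ) ≤ 9) n,
          pow_nonneg (by norm_num : (0:ℝ) ≤ (1/4:ℝ)) t]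
    have hdiag : ∀ c : Fin 3,
        ((A.filter fun a => a 0 = c).card : ℝ) * ((B.filter fun b => b 0 = c).card : ℝ) ≤ 4 * D := by
      intro c
      refine le_trans ?_ hdiagbound
      have := main c c
      simpa using this
    have hoff : ∀ c c' : Fin 3, c ≠ c' →
        ((A.filter fun a => a 0 = c).card : ℝ) * ((B.filter fun b => b 0 = c').card : ℝ) ≤ D := by
      intro c c' hcc
      have := main c c'
      rw [if_neg hcc] at this
      exact this
    rw [hAsum, hBsum]
    calc _ ≤ 9 * D := by
          apply key D _ _ _ _ _ _ hD (Nat.cast_nonneg _) (Nat.cast_nonneg _)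
            (Nat.cast_nonneg _) (Nat.cast_nonneg _) (Nat.cast_nonneg _) (Nat.cast_nonneg _)
            (hdiag 0) (hdiag 1) (hdiag 2)
            (hoff 0 1 (by decide)) (hoff 0 2 (by decide)) (hoff 1 0 (by decide))
            (hoff 1 2 (by decide)) (hoff 2 0 (by decide)) (hoff 2 1 (by decide))
      _ = 9 ^ (n+1) * (1/4 : ℝ) ^ t := by rw [hDdef, pow_succ]; ring

/-- There exists a positive integer `t₀` such that for all `t ≥ t₀` and
`n ≥ 3t − 1`, every (pairwise) `t`-agreeing family `F ⊆ [3]^n` satisfies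
`|F| ≤ 3^n · 3^(−t/10)` (real power on the right-hand side). -/
theorem tAgreeing_three_small : ∃ t₀ : ℕ, 0 < t₀ ∧
    ∀ t n : ℕ, t₀ ≤ t → 3 * t - 1 ≤ n →
    ∀ F : Finset (Fin n → Fin 3),
      (∀ a ∈ F, ∀ b ∈ F,
        t ≤ (Finset.univ.filter (fun i : Fin n => a i = b i)).card) →
      (F.card : ℝ) ≤ 3 ^ n * (3 : ℝ) ^ (-(t : ℝ) / 10) := by
  refine ⟨1, one_pos, fun t n _ _ F h => ?_⟩
  have hsq := cross_bound n t F F h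
  set M : ℝ := (F.card : ℝ) with hM
  have hMnn : 0 ≤ M := Nat.cast_nonneg _
  set R : ℝ := 3 ^ n * (1/2 : ℝ) ^ t with hR
  have hRnn : 0 ≤ R := by positivity
  have hRR : (9:ℝ) ^ n * (1/4 : ℝ) ^ t = R * R := by
    rw [hR]
    have h9 : (9:ℝ) ^ n = 3 ^ n * 3 ^ n := by rw [← mul_pow]; norm_num
    have h4 : ((1/4:ℝ)) ^ t = (1/2:ℝ) ^ t * (1/2:ℝ) ^ t := by rw [← mul_pow]; norm_num
    rw [h9, h4]; ring
  rw [hRR] at hsq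
  have hMR : M ≤ R := by nlinarith [hsq, hMnn, hRnn]
  -- now compare (1/2)^t with 3^(-t/10)
  have hpow : ((1/2:ℝ)) ^ t ≤ (3:ℝ) ^ (-(t : ℝ) / 10) := by
    have e1 : ((1/2:ℝ)) ^ t = Real.exp (-(t * Real.log 2)) := by
      rw [← Real.rpow_natCast (1/2 : ℝ) t, Real.rpow_def_of_pos (by norm_num)]
      congr 1
      rw [show (1/2:ℝ) = 2⁻¹ by norm_num, Real.log_inv]
      ring
    have e2 : (3:ℝ) ^ (-(t : ℝ) / 10) = Real.exp (Real.log 3 * (-(t:ℝ) / 10)) :=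
      Real.rpow_def_of_pos (by norm_num) _
    rw [e1, e2]
    apply Real.exp_le_exp.mpr
    have hlog : Real.log 3 ≤ 10 * Real.log 2 := by
      have h1 : Real.log 3 ≤ Real.log 1024 :=
        Real.log_le_log (by norm_num) (by norm_num)
      have h2 : Real.log 1024 = 10 * Real.log 2 := by
        rw [show (1024:ℝ) = 2 ^ (10:ℕ) by norm_num, Real.log_pow]
        norm_num
      linarith
    have ht : (0:ℝ) ≤ (t:ℝ) := Nat.cast_nonneg _
    nlinarith [mul_le_mul_of_nonneg_left hlog (show (0:ℝ) ≤ (t:ℝ)/10 by positivity)]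
  calc M ≤ R := hMR
    _ ≤ 3 ^ n * (3:ℝ) ^ (-(t : ℝ) / 10) := by
        rw [hR]
        apply mul_le_mul_of_nonneg_left hpow (by positivity)
end

section
/- Let n and t be positive integers with n ≥ t. Then every 3-wise t-agreeing family F ⊆ {0,1}^n satisfies |F| / 2^n ≤ ((√5 − 1)/2)^t. -/
open Finset

namespace ThreeWiseAgree

variable {n : ℕ}

def agr (x y z : Finset (Fin n)) : ℕ :=
  (univ.filter (fun j => (j ∈ x ↔ j ∈ y) ∧ (j ∈ y ↔ j ∈ z))).card

def Agr3 (t : ℕ) (F : Finset (Finset (Fin n))) : Prop :=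
  ∀ x ∈ F, ∀ y ∈ F, ∀ z ∈ F, t ≤ agr x y z

def Int3 (t : ℕ) (G : Finset (Finset (Fin n))) : Prop :=
  ∀ x ∈ G, ∀ y ∈ G, ∀ z ∈ G, t ≤ (x ∩ y ∩ z).card

def IsDown (F : Finset (Finset (Fin n))) : Prop :=
  ∀ x ∈ F, ∀ i, x.erase i ∈ F

/-- Phase A : translation from Bool vectors -/
def bToSet (f : Fin n → Bool) : Finset (Fin n) := univ.filter (fun i => f i = true)

lemma bToSet_inj : Function.Injective (bToSet (n := n)) := by
  intro f g h
  funext i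
  have := congrArg (fun s => i ∈ s) h
  simp only [bToSet, mem_filter, mem_univ, true_and, eq_iff_iff] at this
  cases hf : f i <;> cases hg : g i <;> simp [hf, hg] at this ⊢ <;> tauto

lemma agr_bToSet (f g h : Fin n → Bool) :
    agr (bToSet f) (bToSet g) (bToSet h)
      = (univ.filter (fun i : Fin n => f i = g i ∧ g i = h i)).card := by
  unfold agr
  congr 1
  apply filter_congr
  intro i _
  simp only [bToSet, mem_filter, mem_univ, true_and]
  cases f i <;> cases g i <;> cases h i <;> simp

/-- Phase C : down-sets -/
lemma down_subset {F : Finset (Finset (Fin n))} (hd : IsDown F) :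
    ∀ x ∈ F, ∀ y ⊆ x, y ∈ F := by
  have key : ∀ k : ℕ, ∀ x ∈ F, ∀ y ⊆ x, x.card ≤ y.card + k → y ∈ F := by
    intro k
    induction k with
    | zero =>
      intro x hx y hyx hc
      have : y = x := Finset.eq_of_subset_of_card_le hyx (by omega)
      rwa [this]
    | succ k ih =>
      intro x hx y hyx hc
      by_cases hxy : x = y
      · rwa [← hxy]
      · obtain ⟨i, hix, hiy⟩ : ∃ i, i ∈ x ∧ i ∉ y := by
          by_contra hcon
          push_neg at hcon
          exact hxy (Subset.antisymm (fun a ha => hcon a ha) hyx)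
        refine ih (x.erase i) (hd x hx i) y ?_ ?_
        · intro a ha
          exact mem_erase.2 ⟨fun h => hiy (h ▸ ha), hyx ha⟩
        · have : (x.erase i).card + 1 = x.card := card_erase_add_one hix
          omega
  intro x hx y hyx
  exact key x.card x hx y hyx (by omega)

lemma int3_of_down {t : ℕ} {F : Finset (Finset (Fin n))} (hd : IsDown F)
    (hA : Agr3 t F) : Int3 t (F.image compl) := by
  intro u hu v hv w hw
  obtain ⟨x, hx, rfl⟩ := mem_image.1 hu
  obtain ⟨y, hy, rfl⟩ := mem_image.1 hv
  obtain ⟨z, hz, rfl⟩ := mem_image.1 hw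
  set z' : Finset (Fin n) := z \ (x ∩ y ∩ z) with hz'
  have hz'F : z' ∈ F := down_subset hd z hz z' (sdiff_subset)
  have hsub : univ.filter (fun j => (j ∈ x ↔ j ∈ y) ∧ (j ∈ y ↔ j ∈ z'))
      ⊆ xᶜ ∩ yᶜ ∩ zᶜ := by
    intro j hj
    simp only [mem_filter, mem_univ, true_and] at hj
    simp only [mem_inter, mem_compl]
    by_cases hjx : j ∈ x
    · exfalso
      have hjy : j ∈ y := hj.1.1 hjx
      have hjz' : j ∈ z' := hj.2.1 hjy
      rw [hz', mem_sdiff] at hjz'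
      exact hjz'.2 (by simp [hjx, hjy, hjz'.1])
    · have hjy : j ∉ y := fun h => hjx (hj.1.2 h)
      have hjz' : j ∉ z' := fun h => hjy (hj.2.2 h)
      refine ⟨⟨hjx, hjy⟩, fun hjz => hjz' ?_⟩
      rw [hz', mem_sdiff]
      exact ⟨hjz, fun hmem => hjx (mem_of_mem_inter_left (mem_of_mem_inter_left hmem))⟩
  calc t ≤ agr x y z' := hA x hx y hy z' hz'F
  _ ≤ (xᶜ ∩ yᶜ ∩ zᶜ).card := card_le_card hsub


variable (i : Fin n) (F : Finset (Finset (Fin n)))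

def flipC : Finset (Finset (Fin n)) :=
  F.filter (fun x => x.erase i ∈ F) ∪ (F.filter (fun x => x.erase i ∉ F)).image (·.erase i)

lemma mem_flipC {w : Finset (Fin n)} :
    w ∈ flipC i F ↔ (w ∈ F ∧ w.erase i ∈ F) ∨ (i ∉ w ∧ w ∉ F ∧ insert i w ∈ F) := by
  unfold flipC
  simp only [mem_union, mem_filter, mem_image]
  constructor
  · rintro (⟨h1, h2⟩ | ⟨x, ⟨hx, hxe⟩, rfl⟩)
    · exact Or.inl ⟨h1, h2⟩
    · have hix : i ∈ x := by
        by_contra hix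
        rw [erase_eq_of_notMem hix] at hxe
        exact hxe hx
      refine Or.inr ⟨notMem_erase i x, hxe, ?_⟩
      rwa [insert_erase hix]
  · rintro (⟨h1, h2⟩ | ⟨h1, h2, h3⟩)
    · exact Or.inl ⟨h1, h2⟩
    · refine Or.inr ⟨insert i w, ⟨h3, ?_⟩, ?_⟩
      · rwa [erase_insert h1]
      · rw [erase_insert h1]

lemma card_flipC : (flipC i F).card = F.card := by
  classical
  unfold flipC
  rw [card_union_of_disjoint, card_image_of_injOn]
  · rw [← card_union_of_disjoint (disjoint_filter_filter'  _ _ ?_), filter_union_filter_not_eq]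
    exact disjoint_iff_inf_le.2 (fun x hx => hx.2 hx.1)
  · intro x hx y hy hxy
    simp only [coe_filter, Set.mem_setOf_eq] at hx hy
    have hix : i ∈ x := by
      by_contra h; rw [erase_eq_of_notMem h] at hx; exact hx.2 hx.1
    have hiy : i ∈ y := by
      by_contra h; rw [erase_eq_of_notMem h] at hy; exact hy.2 hy.1
    have hxy' : x.erase i = y.erase i := hxy
    rw [← insert_erase hix, ← insert_erase hiy, hxy']
  · rw [disjoint_right]
    rintro w hw
    simp only [mem_image, mem_filter] at hw ⊢
    obtain ⟨x, ⟨hx, hxe⟩, rfl⟩ := hw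
    intro hcon
    exact hxe hcon.1

lemma agr3_flipC {t : ℕ} (hA : Agr3 t F) : Agr3 t (flipC i F) := by
  classical
  intro x' hx' y' hy' z' hz'
  rw [mem_flipC] at hx' hy' hz'
  by_cases hall : x' ∈ F ∧ y' ∈ F ∧ z' ∈ F
  · exact hA x' hall.1 y' hall.2.1 z' hall.2.2
  -- at least one moved
  · set r : Finset (Fin n) → Finset (Fin n) :=
      fun w => if i ∈ w then w.erase i else if w ∈ F then w else insert i w with hr
    have hrF : ∀ w, ((w ∈ F ∧ w.erase i ∈ F) ∨ (i ∉ w ∧ w ∉ F ∧ insert i w ∈ F)) → r w ∈ F := by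
      rintro w (⟨h1, h2⟩ | ⟨h1, h2, h3⟩)
      · by_cases hiw : i ∈ w
        · simpa [hr, hiw] using h2
        · simpa [hr, hiw, h1] using h1
      · simpa [hr, h1, h2] using h3
    have hri : ∀ w, ((w ∈ F ∧ w.erase i ∈ F) ∨ (i ∉ w ∧ w ∉ F ∧ insert i w ∈ F)) →
        (i ∈ r w ↔ (w ∉ F)) := by
      rintro w (⟨h1, h2⟩ | ⟨h1, h2, h3⟩)
      · by_cases hiw : i ∈ w <;> simp [hr, hiw, h1]
      · simp [hr, h1, h2]
    have hrj : ∀ w (j : Fin n), j ≠ i → (j ∈ r w ↔ j ∈ w) := by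
      intro w j hj
      by_cases hiw : i ∈ w <;> by_cases hwF : w ∈ F <;> simp [hr, hiw, hwF, hj]
    have hM : x' ∉ F ∨ y' ∉ F ∨ z' ∉ F := by tauto
    have hsub : univ.filter (fun j => (j ∈ r x' ↔ j ∈ r y') ∧ (j ∈ r y' ↔ j ∈ r z'))
        ⊆ univ.filter (fun j => (j ∈ x' ↔ j ∈ y') ∧ (j ∈ y' ↔ j ∈ z')) := by
      intro j hj
      simp only [mem_filter, mem_univ, true_and] at hj ⊢
      by_cases hji : j = i
      · rw [hji] at hj ⊢
        -- all reps agree at i; since one rep contains i, all do; so all are moved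
        rw [hri x' hx', hri y' hy', hri z' hz'] at hj
        have : x' ∉ F ∧ y' ∉ F ∧ z' ∉ F := by tauto
        have hix' : i ∉ x' := by rcases hx' with ⟨h, _⟩ | ⟨h, _, _⟩; exact absurd h this.1; exact h
        have hiy' : i ∉ y' := by rcases hy' with ⟨h, _⟩ | ⟨h, _, _⟩; exact absurd h this.2.1; exact h
        have hiz' : i ∉ z' := by rcases hz' with ⟨h, _⟩ | ⟨h, _, _⟩; exact absurd h this.2.2; exact h
        simp [hix', hiy', hiz']
      · rw [hrj x' j hji, hrj y' j hji, hrj z' j hji] at hj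
        exact hj
    calc t ≤ agr (r x') (r y') (r z') := hA _ (hrF x' hx') _ (hrF y' hy') _ (hrF z' hz')
    _ ≤ agr x' y' z' := card_le_card hsub

def msD (G : Finset (Finset (Fin n))) : ℕ := ∑ x ∈ G, x.card

lemma exists_down {t : ℕ} : ∀ N (F : Finset (Finset (Fin n))), msD F ≤ N → Agr3 t F →
    ∃ F' : Finset (Finset (Fin n)), Agr3 t F' ∧ F'.card = F.card ∧ IsDown F' := by
  intro N
  induction N with
  | zero =>
    intro F hm hA
    refine ⟨F, hA, rfl, ?_⟩
    intro x hx j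
    have hx0 : x.card = 0 := by
      have : x.card ≤ msD F := single_le_sum (f := fun x => x.card) (fun _ _ => Nat.zero_le _) hx
      omega
    rw [card_eq_zero] at hx0
    subst hx0
    simpa using hx
  | succ N ih =>
    intro F hm hA
    classical
    by_cases hd : IsDown F
    · exact ⟨F, hA, rfl, hd⟩
    · unfold IsDown at hd
      push_neg at hd
      obtain ⟨x, hx, i, hxe⟩ := hd
      have hix : i ∈ x := by
        by_contra h
        rw [erase_eq_of_notMem h] at hxe
        exact hxe hx
      have hmlt : msD (flipC i F) < msD F := by
        unfold msD flipC
        rw [sum_union, sum_image]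
        · have hsplit : ∑ x ∈ F, x.card =
              ∑ x ∈ F.filter (fun x => x.erase i ∈ F), x.card +
              ∑ x ∈ F.filter (fun x => x.erase i ∉ F), x.card := by
            rw [← sum_union (disjoint_filter_filter_not F F _), filter_union_filter_not_eq]
          rw [hsplit]
          have hlt : ∑ x ∈ F.filter (fun x => x.erase i ∉ F), (x.erase i).card <
              ∑ x ∈ F.filter (fun x => x.erase i ∉ F), x.card := by
            apply sum_lt_sum_of_nonempty
            · exact ⟨x, mem_filter.2 ⟨hx, hxe⟩⟩
            · intro y hy
              simp only [mem_filter] at hy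
              have hiy : i ∈ y := by
                by_contra h
                rw [erase_eq_of_notMem h] at hy
                exact hy.2 hy.1
              have := card_erase_add_one hiy
              omega
          omega
        · intro a ha b hb hab
          rw [mem_coe, mem_filter] at ha hb
          have hia : i ∈ a := by
            by_contra h; rw [erase_eq_of_notMem h] at ha; exact ha.2 ha.1
          have hib : i ∈ b := by
            by_contra h; rw [erase_eq_of_notMem h] at hb; exact hb.2 hb.1
          have hab' : a.erase i = b.erase i := hab
          rw [← insert_erase hia, ← insert_erase hib, hab']
        · rw [disjoint_right]
          rintro w hw
          simp only [mem_image, mem_filter] at hw ⊢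
          obtain ⟨a, ⟨ha, hae⟩, rfl⟩ := hw
          intro hcon
          exact hae hcon.1
      obtain ⟨F', h1, h2, h3⟩ := ih (flipC i F) (by omega) (agr3_flipC i F hA)
      exact ⟨F', h1, h2.trans (card_flipC i F), h3⟩


def Shifted (G : Finset (Finset (Fin n))) : Prop :=
  ∀ x ∈ G, ∀ j ∈ x, ∀ i : Fin n, i < j → i ∉ x → insert i (x.erase j) ∈ G

variable (i j : Fin n) (G : Finset (Finset (Fin n)))

def movable (x : Finset (Fin n)) : Prop := j ∈ x ∧ i ∉ x ∧ insert i (x.erase j) ∉ G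

instance (x : Finset (Fin n)) : Decidable (movable i j G x) := by unfold movable; infer_instance

def shiftC : Finset (Finset (Fin n)) :=
  G.filter (fun x => ¬ movable i j G x) ∪
    (G.filter (movable i j G)).image (fun x => insert i (x.erase j))

lemma shift_roundtrip (hij : i ≠ j) {x : Finset (Fin n)} (hjx : j ∈ x) (hix : i ∉ x) :
    insert j ((insert i (x.erase j)).erase i) = x := by
  have h1 : i ∉ x.erase j := fun h => hix (mem_of_mem_erase h)
  rw [erase_insert h1, insert_erase hjx]

lemma shift_roundtrip' (hij : i ≠ j) {w : Finset (Fin n)} (hiw : i ∈ w) (hjw : j ∉ w) :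
    insert i ((insert j (w.erase i)).erase j) = w := by
  have h1 : j ∉ w.erase i := fun h => hjw (mem_of_mem_erase h)
  rw [erase_insert h1, insert_erase hiw]

lemma mem_shift_i (hij : i ≠ j) {x : Finset (Fin n)} (hjx : j ∈ x) (hix : i ∉ x) :
    i ∈ insert i (x.erase j) ∧ j ∉ insert i (x.erase j) := by
  refine ⟨mem_insert_self i _, fun hcon => ?_⟩
  rcases mem_insert.1 hcon with h | h
  · exact hij h.symm
  · exact (notMem_erase j x) h

lemma mem_shiftC (hij : i ≠ j) {w : Finset (Fin n)} :
    w ∈ shiftC i j G ↔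
      (w ∈ G ∧ (j ∈ w → i ∉ w → insert i (w.erase j) ∈ G)) ∨
      (i ∈ w ∧ j ∉ w ∧ w ∉ G ∧ insert j (w.erase i) ∈ G) := by
  unfold shiftC
  simp only [mem_union, mem_filter, mem_image]
  constructor
  · rintro (⟨h1, h2⟩ | ⟨x, ⟨hx, hmov⟩, rfl⟩)
    · refine Or.inl ⟨h1, fun hj hi => ?_⟩
      unfold movable at h2; tauto
    · obtain ⟨hjx, hix, hins⟩ := hmov
      obtain ⟨hi', hj'⟩ := mem_shift_i i j hij hjx hix
      exact Or.inr ⟨hi', hj', hins, by rw [shift_roundtrip i j hij hjx hix]; exact hx⟩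
  · rintro (⟨h1, h2⟩ | ⟨h1, h2, h3, h4⟩)
    · refine Or.inl ⟨h1, ?_⟩
      unfold movable; tauto
    · refine Or.inr ⟨insert j (w.erase i), ⟨h4, ?_, ?_, ?_⟩, ?_⟩
      · exact mem_insert_self j _
      · intro hcon
        rcases mem_insert.1 hcon with h | h
        · exact hij h
        · exact (notMem_erase i w) h
      · rw [shift_roundtrip' i j hij h1 h2]; exact h3
      · rw [shift_roundtrip' i j hij h1 h2]

lemma card_shiftC (hij : i ≠ j) : (shiftC i j G).card = G.card := by
  classical
  unfold shiftC
  rw [card_union_of_disjoint, card_image_of_injOn]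
  · rw [← card_union_of_disjoint (disjoint_filter_filter_not G G _).symm]
    congr 1
    rw [union_comm, filter_union_filter_not_eq]
  · intro x hx y hy hxy
    simp only [coe_filter, Set.mem_setOf_eq] at hx hy
    have hxy' : insert i (x.erase j) = insert i (y.erase j) := hxy
    rw [← shift_roundtrip i j hij hx.2.1 hx.2.2.1, ← shift_roundtrip i j hij hy.2.1 hy.2.2.1, hxy']
  · rw [disjoint_right]
    rintro w hw
    simp only [mem_image, mem_filter] at hw ⊢
    obtain ⟨x, ⟨hx, hmov⟩, rfl⟩ := hw
    intro hcon
    exact hmov.2.2 hcon.1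

def rep3 (w : Finset (Fin n)) : Finset (Fin n) :=
  if i ∈ w ∧ j ∉ w ∧ w ∉ G then insert j (w.erase i)
  else if j ∈ w ∧ i ∉ w then insert i (w.erase j) else w

lemma int3_shiftC (hij : i ≠ j) {t : ℕ} (hI : Int3 t G) : Int3 t (shiftC i j G) := by
  classical
  intro x hx y hy z hz
  rw [mem_shiftC i j G hij] at hx hy hz
  by_cases hall : x ∈ G ∧ y ∈ G ∧ z ∈ G
  · exact hI x hall.1 y hall.2.1 z hall.2.2
  · -- at least one moved
    set r : Finset (Fin n) → Finset (Fin n) := rep3 i j G with hr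
    have hrdef : ∀ w, r w = if i ∈ w ∧ j ∉ w ∧ w ∉ G then insert j (w.erase i)
      else if j ∈ w ∧ i ∉ w then insert i (w.erase j) else w := by
      intro w; rw [hr]; rfl
    -- rep is in G
    have hrG : ∀ w, ((w ∈ G ∧ (j ∈ w → i ∉ w → insert i (w.erase j) ∈ G)) ∨
        (i ∈ w ∧ j ∉ w ∧ w ∉ G ∧ insert j (w.erase i) ∈ G)) → r w ∈ G := by
      intro w hw
      rw [hrdef]
      split_ifs with hA hB
      · rcases hw with ⟨h1, -⟩ | ⟨-, -, -, h4⟩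
        · exact absurd h1 hA.2.2
        · exact h4
      · rcases hw with ⟨h1, h2⟩ | ⟨h1, -, -, -⟩
        · exact h2 hB.1 hB.2
        · exact absurd h1 hB.2
      · rcases hw with ⟨h1, -⟩ | ⟨h1, h2, h3, -⟩
        · exact h1
        · exact absurd ⟨h1, h2, h3⟩ hA
    -- membership of reps off {i,j} is unchanged
    have hrk : ∀ w (k : Fin n), k ≠ i → k ≠ j → (k ∈ r w ↔ k ∈ w) := by
      intro w k hki hkj
      rw [hrdef]
      split_ifs with h1 h2
      · simp [mem_insert, hkj, mem_erase, hki]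
      · simp [mem_insert, hki, mem_erase, hkj]
      · exact Iff.rfl
    -- the moved element's rep lacks i
    have hMi : ∀ w, (i ∈ w ∧ j ∉ w ∧ w ∉ G) → i ∉ r w := by
      intro w hM
      rw [hrdef, if_pos hM]
      intro hcon
      rcases mem_insert.1 hcon with h | h
      · exact hij h
      · exact (notMem_erase i w) h
    -- if j is in the rep, then i was in the original
    have hji : ∀ w, j ∈ r w → i ∈ w := by
      intro w hjw
      rw [hrdef] at hjw
      split_ifs at hjw with h1 h2
      · exact h1.1
      · exfalso
        rcases mem_insert.1 hjw with h | h
        · exact hij h.symm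
        · exact (notMem_erase j w) h
      · by_contra hc
        by_cases hjw' : j ∈ w
        · exact h2 ⟨hjw', hc⟩
        · exact hjw' hjw
    -- one of the three reps lacks i
    have hMex : i ∉ r x ∨ i ∉ r y ∨ i ∉ r z := by
      by_cases hxG : x ∈ G
      · by_cases hyG : y ∈ G
        · have hzG : z ∉ G := by tauto
          rcases hz with ⟨h, -⟩ | ⟨h1, h2, h3, -⟩
          · exact absurd h hzG
          · exact Or.inr (Or.inr (hMi z ⟨h1, h2, h3⟩))
        · rcases hy with ⟨h, -⟩ | ⟨h1, h2, h3, -⟩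
          · exact absurd h hyG
          · exact Or.inr (Or.inl (hMi y ⟨h1, h2, h3⟩))
      · rcases hx with ⟨h, -⟩ | ⟨h1, h2, h3, -⟩
        · exact absurd h hxG
        · exact Or.inl (hMi x ⟨h1, h2, h3⟩)
    have hino : ¬((i ∈ r x ∧ i ∈ r y) ∧ i ∈ r z) := by tauto
    set D : Finset (Fin n) := {i, j} with hD
    have hoff : (r x ∩ r y ∩ r z) \ D = (x ∩ y ∩ z) \ D := by
      ext k
      simp only [mem_sdiff, mem_inter, hD, mem_insert, mem_singleton]
      constructor
      · rintro ⟨⟨⟨hkx, hky⟩, hkz⟩, hk⟩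
        push_neg at hk
        rw [hrk x k hk.1 hk.2, hrk y k hk.1 hk.2, hrk z k hk.1 hk.2] at *
        exact ⟨⟨⟨hkx, hky⟩, hkz⟩, by push_neg; exact hk⟩
      · rintro ⟨⟨⟨hkx, hky⟩, hkz⟩, hk⟩
        push_neg at hk
        rw [← hrk x k hk.1 hk.2] at hkx
        rw [← hrk y k hk.1 hk.2] at hky
        rw [← hrk z k hk.1 hk.2] at hkz
        exact ⟨⟨⟨hkx, hky⟩, hkz⟩, by push_neg; exact hk⟩
    have honD : ((r x ∩ r y ∩ r z) ∩ D).card ≤ ((x ∩ y ∩ z) ∩ D).card := by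
      by_cases hjmem : j ∈ r x ∩ r y ∩ r z
      · have hixyz : i ∈ (x ∩ y ∩ z) ∩ D := by
          simp only [mem_inter] at hjmem ⊢
          refine ⟨⟨⟨hji x hjmem.1.1, hji y hjmem.1.2⟩, hji z hjmem.2⟩, ?_⟩
          simp [hD]
        have hsub : (r x ∩ r y ∩ r z) ∩ D ⊆ {j} := by
          intro k hk
          simp only [mem_inter, hD, mem_insert, mem_singleton] at hk
          rcases hk.2 with h | h
          · exact absurd (h ▸ hk.1) hino
          · simp [h]
        calc ((r x ∩ r y ∩ r z) ∩ D).card ≤ ({j} : Finset (Fin n)).card := card_le_card hsub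
        _ = 1 := card_singleton j
        _ ≤ ((x ∩ y ∩ z) ∩ D).card := card_pos.2 ⟨i, hixyz⟩
      · have hjmem' : ¬((j ∈ r x ∧ j ∈ r y) ∧ j ∈ r z) := by
          intro hcon
          exact hjmem (by simp only [mem_inter]; exact hcon)
        have : (r x ∩ r y ∩ r z) ∩ D = ∅ := by
          ext k
          simp only [mem_inter, hD, mem_insert, mem_singleton, notMem_empty, iff_false]
          rintro ⟨hk, h | h⟩
          · exact hino (h ▸ hk)
          · exact hjmem' (h ▸ hk)
        rw [this]
        simp
    calc t ≤ (r x ∩ r y ∩ r z).card := hI _ (hrG x hx) _ (hrG y hy) _ (hrG z hz)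
    _ = ((r x ∩ r y ∩ r z) ∩ D).card + ((r x ∩ r y ∩ r z) \ D).card :=
        (card_inter_add_card_sdiff _ _).symm
    _ ≤ ((x ∩ y ∩ z) ∩ D).card + ((x ∩ y ∩ z) \ D).card := by
        rw [hoff]; exact Nat.add_le_add_right honD _
    _ = (x ∩ y ∩ z).card := card_inter_add_card_sdiff _ _

def msS (G : Finset (Finset (Fin n))) : ℕ := ∑ x ∈ G, ∑ k ∈ x, (k : ℕ)

lemma msS_shiftC (hij : i < j) (hmov : ∃ x ∈ G, movable i j G x) :
    msS (shiftC i j G) < msS G := by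
  classical
  have hijne : i ≠ j := ne_of_lt hij
  unfold msS shiftC
  rw [sum_union, sum_image]
  · have hsplit : ∑ x ∈ G, ∑ k ∈ x, (k:ℕ) =
        ∑ x ∈ G.filter (fun x => ¬ movable i j G x), ∑ k ∈ x, (k:ℕ) +
        ∑ x ∈ G.filter (movable i j G), ∑ k ∈ x, (k:ℕ) := by
      rw [← sum_union (disjoint_filter_filter_not G G _).symm, union_comm,
        filter_union_filter_not_eq]
    rw [hsplit]
    have hlt : ∑ x ∈ G.filter (movable i j G), ∑ k ∈ insert i (x.erase j), (k:ℕ) <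
        ∑ x ∈ G.filter (movable i j G), ∑ k ∈ x, (k:ℕ) := by
      apply sum_lt_sum_of_nonempty
      · obtain ⟨x, hx, hm⟩ := hmov
        exact ⟨x, mem_filter.2 ⟨hx, hm⟩⟩
      · intro x hx
        rw [mem_filter] at hx
        have hjx := hx.2.1
        have hix := hx.2.2.1
        have h1 : i ∉ x.erase j := fun h => hix (mem_of_mem_erase h)
        have e1 : ∑ k ∈ insert i (x.erase j), (k:ℕ) = (i:ℕ) + ∑ k ∈ x.erase j, (k:ℕ) :=
          sum_insert h1
        have e2 : ∑ k ∈ x.erase j, (k:ℕ) + (j:ℕ) = ∑ k ∈ x, (k:ℕ) := by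
          rw [add_comm]
          exact add_sum_erase x (fun k : Fin n => (k:ℕ)) hjx
        have : (i:ℕ) < (j:ℕ) := hij
        omega
    omega
  · intro a ha b hb hab
    rw [mem_coe, mem_filter] at ha hb
    have hab' : insert i (a.erase j) = insert i (b.erase j) := hab
    rw [← shift_roundtrip i j hijne ha.2.1 ha.2.2.1,
      ← shift_roundtrip i j hijne hb.2.1 hb.2.2.1, hab']
  · rw [disjoint_right]
    rintro w hw
    simp only [mem_image, mem_filter] at hw ⊢
    obtain ⟨x, ⟨hx, hmv⟩, rfl⟩ := hw
    intro hcon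
    exact hmv.2.2 hcon.1

lemma exists_shifted {t : ℕ} : ∀ N (G : Finset (Finset (Fin n))), msS G ≤ N → Int3 t G →
    ∃ G' : Finset (Finset (Fin n)), Int3 t G' ∧ G'.card = G.card ∧ Shifted G' := by
  intro N
  induction N with
  | zero =>
    intro G hm hI
    refine ⟨G, hI, rfl, ?_⟩
    intro x hx jj hj ii hij hii
    exfalso
    have hxs : (∑ k ∈ x, (k:ℕ)) ≤ msS G := by
      unfold msS
      exact single_le_sum (f := fun y : Finset (Fin n) => ∑ k ∈ y, (k:ℕ))
        (fun y _ => Nat.zero_le _) hx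
    have hjs : (jj:ℕ) ≤ ∑ k ∈ x, (k:ℕ) :=
      single_le_sum (fun k _ => Nat.zero_le _) hj
    have : (ii:ℕ) < (jj:ℕ) := hij
    omega
  | succ N ih =>
    intro G hm hI
    classical
    by_cases hs : Shifted G
    · exact ⟨G, hI, rfl, hs⟩
    · unfold Shifted at hs
      push_neg at hs
      obtain ⟨x, hx, jj, hj, ii, hij, hii, hins⟩ := hs
      have hijne : ii ≠ jj := ne_of_lt hij
      have hmlt := msS_shiftC ii jj G hij ⟨x, hx, hj, hii, hins⟩
      obtain ⟨G', h1, h2, h3⟩ := ih (shiftC ii jj G) (by omega) (int3_shiftC ii jj G hijne hI)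
      exact ⟨G', h1, h2.trans (card_shiftC ii jj G hijne), h3⟩


local notation "φ" => (Real.sqrt 5 - 1) / 2

private lemma hs5 : (Real.sqrt 5) ^ 2 = 5 := Real.sq_sqrt (by norm_num)

private lemma phi_pos : (0:ℝ) < φ := by
  have h := hs5
  have h2 : (0:ℝ) ≤ Real.sqrt 5 := Real.sqrt_nonneg 5
  nlinarith

private lemma phi_cubic : 1 + φ^3 = 2 * φ := by
  have h := hs5
  linear_combination ((Real.sqrt 5 - 3)/8) * h

/-- prefix count -/
def pref {n : ℕ} (A : Finset (Fin n)) (m : ℕ) : ℕ :=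
  (A.filter (fun k : Fin n => (k:ℕ) < m)).card

/-- walk reaches t -/
def Reach {n : ℕ} (t : ℕ) (A : Finset (Fin n)) : Prop :=
  ∃ m, m ≤ n ∧ 2*m + t ≤ 3 * pref A m

instance {n t : ℕ} (A : Finset (Fin n)) : Decidable (Reach t A) := by
  unfold Reach; infer_instance

/-- tail of a set in Fin (n+1) -/
def tl {n : ℕ} (A : Finset (Fin (n+1))) : Finset (Fin n) :=
  univ.filter (fun k : Fin n => k.succ ∈ A)

lemma mem_tl {n : ℕ} (A : Finset (Fin (n+1))) (k : Fin n) :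
    k ∈ tl A ↔ k.succ ∈ A := by simp [tl]

lemma pref_succ {n : ℕ} (A : Finset (Fin (n+1))) (m : ℕ) :
    pref A (m+1) = (if (0 : Fin (n+1)) ∈ A then 1 else 0) + pref (tl A) m := by
  classical
  have himg : ((tl A).filter (fun k : Fin _ => (k:ℕ) < m)).image Fin.succ
      = A.filter (fun k : Fin _ => (k:ℕ) < m + 1 ∧ k ≠ 0) := by
    ext k
    simp only [mem_image, mem_filter, mem_tl]
    constructor
    · rintro ⟨k', ⟨hk', hlt⟩, rfl⟩
      refine ⟨hk', ?_, Fin.succ_ne_zero k'⟩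
      simpa [Fin.val_succ] using Nat.succ_lt_succ hlt
    · rintro ⟨hk, hlt, hne⟩
      obtain ⟨k', rfl⟩ := Fin.exists_succ_eq.2 hne
      exact ⟨k', ⟨hk, by simpa [Fin.val_succ] using Nat.lt_of_succ_lt_succ hlt⟩, rfl⟩
  have hsplit : A.filter (fun k : Fin _ => (k:ℕ) < m + 1)
      = (A.filter (fun k : Fin _ => (k:ℕ) < m + 1 ∧ k = 0)) ∪
        (A.filter (fun k : Fin _ => (k:ℕ) < m + 1 ∧ k ≠ 0)) := by
    rw [← filter_or]
    apply filter_congr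
    intro k hk
    by_cases h : k = 0 <;> simp [h]
  have hdisj : Disjoint (A.filter (fun k : Fin _ => (k:ℕ) < m + 1 ∧ k = 0))
      (A.filter (fun k : Fin _ => (k:ℕ) < m + 1 ∧ k ≠ 0)) := by
    apply disjoint_filter_filter'
    exact disjoint_iff_inf_le.2 (fun k hk => hk.2.2 hk.1.2)
  have h0 : (A.filter (fun k : Fin _ => (k:ℕ) < m + 1 ∧ k = 0)).card
      = if (0 : Fin (n+1)) ∈ A then 1 else 0 := by
    by_cases h : (0 : Fin (n+1)) ∈ A
    · rw [if_pos h]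
      have : A.filter (fun k : Fin _ => (k:ℕ) < m + 1 ∧ k = 0) = {0} := by
        ext k; simp only [mem_filter, mem_singleton]
        constructor
        · rintro ⟨_, _, rfl⟩; rfl
        · rintro rfl; exact ⟨h, Nat.succ_pos m, rfl⟩
      rw [this, card_singleton]
    · rw [if_neg h]
      have : A.filter (fun k : Fin _ => (k:ℕ) < m + 1 ∧ k = 0) = ∅ := by
        ext k; simp only [mem_filter, notMem_empty, iff_false]
        rintro ⟨hk, _, rfl⟩; exact h hk
      rw [this, card_empty]
  have hcard2 : ((tl A).filter (fun k : Fin _ => (k:ℕ) < m)).card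
      = (A.filter (fun k : Fin _ => (k:ℕ) < m + 1 ∧ k ≠ 0)).card := by
    rw [← himg, card_image_of_injective _ (Fin.succ_injective n)]
  unfold pref
  rw [hsplit, card_union_of_disjoint hdisj, h0, hcard2]

lemma reach_succ_mem {n t : ℕ} (A : Finset (Fin (n+1))) (h0 : (0:Fin (n+1)) ∈ A) :
    Reach (t+1) A ↔ Reach t (tl A) := by
  constructor
  · rintro ⟨m, hm, hle⟩
    cases m with
    | zero => simp [pref] at hle
    | succ m' =>
      refine ⟨m', by omega, ?_⟩
      rw [pref_succ, if_pos h0] at hle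
      omega
  · rintro ⟨m, hm, hle⟩
    refine ⟨m+1, Nat.succ_le_succ hm, ?_⟩
    rw [pref_succ, if_pos h0]
    omega

lemma reach_succ_not_mem {n t : ℕ} (A : Finset (Fin (n+1))) (h0 : (0:Fin (n+1)) ∉ A) :
    Reach (t+1) A ↔ Reach (t+3) (tl A) := by
  constructor
  · rintro ⟨m, hm, hle⟩
    cases m with
    | zero => simp [pref] at hle
    | succ m' =>
      refine ⟨m', by omega, ?_⟩
      rw [pref_succ, if_neg h0] at hle
      omega
  · rintro ⟨m, hm, hle⟩
    refine ⟨m+1, Nat.succ_le_succ hm, ?_⟩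
    rw [pref_succ, if_neg h0]
    omega


lemma card_filter_lt {m : ℕ} (hm : m ≤ n) :
    ((univ : Finset (Fin n)).filter (fun k : Fin n => (k:ℕ) < m)).card = m := by
  have himg : ((univ : Finset (Fin n)).filter (fun k : Fin n => (k:ℕ) < m)).image
      (fun k : Fin n => (k:ℕ)) = Finset.range m := by
    ext j
    simp only [mem_image, mem_filter, mem_univ, true_and, mem_range]
    constructor
    · rintro ⟨k, hk, rfl⟩
      exact hk
    · intro hj
      exact ⟨⟨j, lt_of_lt_of_le hj hm⟩, hj, rfl⟩
  have hinj : Set.InjOn (fun k : Fin n => (k:ℕ))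
      ((univ : Finset (Fin n)).filter (fun k : Fin n => (k:ℕ) < m)) := by
    intro p _ q _ hpq
    exact Fin.ext hpq
  rw [← card_image_of_injOn hinj, himg, Finset.card_range]

lemma pref_add_nonA {A : Finset (Fin n)} {m : ℕ} (hm : m ≤ n) :
    pref A m + ((univ : Finset (Fin n)).filter (fun k : Fin n => (k:ℕ) < m ∧ k ∉ A)).card
      = m := by
  classical
  have hdisj : Disjoint (A.filter (fun k : Fin n => (k:ℕ) < m))
      ((univ : Finset (Fin n)).filter (fun k : Fin n => (k:ℕ) < m ∧ k ∉ A)) := by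
    rw [disjoint_left]
    intro k hk hk'
    simp only [mem_filter] at hk hk'
    exact hk'.2.2 hk.1
  have hun : (A.filter (fun k : Fin n => (k:ℕ) < m)) ∪
      ((univ : Finset (Fin n)).filter (fun k : Fin n => (k:ℕ) < m ∧ k ∉ A))
      = (univ : Finset (Fin n)).filter (fun k : Fin n => (k:ℕ) < m) := by
    ext k
    simp only [mem_union, mem_filter, mem_univ, true_and]
    by_cases hk : k ∈ A <;> simp [hk] <;> tauto
  have h1 := card_union_of_disjoint hdisj
  rw [hun, card_filter_lt (n := n) hm] at h1
  exact h1.symm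

lemma matching_aux (A : Finset (Fin n)) (t : ℕ)
    (h : ∀ m : ℕ, m ≤ n → 3 * pref A m + 1 ≤ 2*m + t) :
    ∀ m : ℕ, m ≤ n →
    ∃ (T AB AC UB UC : Finset (Fin n)) (φB φC : Fin n → Fin n),
      (T ∪ AB ∪ AC = A.filter (fun k : Fin n => (k:ℕ) < m)) ∧
      Disjoint T AB ∧ Disjoint T AC ∧ Disjoint AB AC ∧
      (UB ⊆ univ.filter (fun k : Fin n => (k:ℕ) < m ∧ k ∉ A)) ∧
      (UC ⊆ univ.filter (fun k : Fin n => (k:ℕ) < m ∧ k ∉ A)) ∧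
      AB.image φB = UB ∧ AC.image φC = UC ∧
      Set.InjOn φB AB ∧ Set.InjOn φC AC ∧
      (∀ a ∈ AB, φB a < a) ∧ (∀ a ∈ AC, φC a < a) ∧
      3 * pref A m ≤ 2 * m + T.card ∧ T.card + 1 ≤ t := by
  classical
  intro m
  induction m with
  | zero =>
    intro _
    refine ⟨∅, ∅, ∅, ∅, ∅, id, id, ?_, ?_, ?_, ?_, ?_, ?_, ?_, ?_, ?_, ?_, ?_, ?_, ?_, ?_⟩
    · simp [pref]
    · simp
    · simp
    · simp
    · simp
    · simp
    · simp
    · simp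
    · simp [Set.InjOn]
    · simp [Set.InjOn]
    · simp
    · simp
    · simp [pref]
    · have := h 0 (Nat.zero_le n)
      simp [pref] at this
      simp only [card_empty]
      omega
  | succ m ih =>
    intro hm1
    have hmn : m < n := hm1
    have hm : m ≤ n := le_of_lt hmn
    obtain ⟨T, AB, AC, UB, UC, φB, φC, hun, hTB, hTC, hBC, hUBs, hUCs, hUBim, hUCim,
      hBinj, hCinj, hBlt, hClt, hc1, hc2⟩ := ih hm
    set a : Fin n := ⟨m, hmn⟩ with ha
    have haval : (a : ℕ) = m := rfl
    -- prefix filters at m+1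
    have hfilt : ∀ S : Finset (Fin n), S.filter (fun k : Fin n => (k:ℕ) < m + 1)
        = if a ∈ S then insert a (S.filter (fun k : Fin n => (k:ℕ) < m))
          else S.filter (fun k : Fin n => (k:ℕ) < m) := by
      intro S
      split_ifs with haS
      · ext k
        simp only [mem_filter, mem_insert]
        constructor
        · rintro ⟨hkS, hlt⟩
          by_cases hkm : (k:ℕ) < m
          · exact Or.inr ⟨hkS, hkm⟩
          · have : (k:ℕ) = m := by omega
            exact Or.inl (Fin.ext (this.trans haval.symm))
        · rintro (rfl | ⟨hkS, hlt⟩)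
          · exact ⟨haS, by omega⟩
          · exact ⟨hkS, by omega⟩
      · ext k
        simp only [mem_filter]
        constructor
        · rintro ⟨hkS, hlt⟩
          refine ⟨hkS, ?_⟩
          by_cases hkm : (k:ℕ) < m
          · exact hkm
          · exfalso
            have : (k:ℕ) = m := by omega
            exact haS ((Fin.ext (this.trans haval.symm) : k = a) ▸ hkS)
        · rintro ⟨hkS, hlt⟩
          exact ⟨hkS, by omega⟩
    -- elements of the old data have small values
    have hTsub : T ⊆ A.filter (fun k : Fin n => (k:ℕ) < m) := by
      rw [← hun]; intro k hk; exact mem_union_left _ (mem_union_left _ hk)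
    have hBsub : AB ⊆ A.filter (fun k : Fin n => (k:ℕ) < m) := by
      rw [← hun]; intro k hk; exact mem_union_left _ (mem_union_right _ hk)
    have hCsub : AC ⊆ A.filter (fun k : Fin n => (k:ℕ) < m) := by
      rw [← hun]; intro k hk; exact mem_union_right _ hk
    have haT : a ∉ T := fun hc => by
      have := (mem_filter.1 (hTsub hc)).2; omega
    have haB : a ∉ AB := fun hc => by
      have := (mem_filter.1 (hBsub hc)).2; omega
    have haC : a ∉ AC := fun hc => by
      have := (mem_filter.1 (hCsub hc)).2; omega
    have hneB : ∀ b ∈ AB, b ≠ a := fun b hb hc => haB (hc ▸ hb)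
    have hneC : ∀ b ∈ AC, b ≠ a := fun b hb hc => haC (hc ▸ hb)
    have hNAmono : univ.filter (fun k : Fin n => (k:ℕ) < m ∧ k ∉ A)
        ⊆ univ.filter (fun k : Fin n => (k:ℕ) < m + 1 ∧ k ∉ A) := by
      intro k hk
      simp only [mem_filter] at hk ⊢
      exact ⟨hk.1, by omega, hk.2.2⟩
    by_cases haA : a ∈ A
    · -- prefix grows by one
      have hpref1 : pref A (m+1) = pref A m + 1 := by
        unfold pref
        rw [hfilt A, if_pos haA, card_insert_of_notMem (fun hc => by
          have := (mem_filter.1 hc).2; omega)]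
      rcases Nat.lt_or_ge (3 * pref A m) (2*m + T.card) with hlt | hge
      · -- strict inequality : capacity available
        -- find a side with a free slot
        have hd2 : Disjoint (T ∪ AB) AC := by
          rw [disjoint_union_left]
          exact ⟨hTC, hBC⟩
        have hcards : T.card + AB.card + AC.card = pref A m := by
          unfold pref
          rw [← hun, card_union_of_disjoint hd2, card_union_of_disjoint hTB]
        have hUBcard : UB.card = AB.card := by rw [← hUBim]; exact card_image_of_injOn hBinj
        have hUCcard : UC.card = AC.card := by rw [← hUCim]; exact card_image_of_injOn hCinj
        have hNAcard : ((univ : Finset (Fin n)).filter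
            (fun k : Fin n => (k:ℕ) < m ∧ k ∉ A)).card = m - pref A m := by
          have := pref_add_nonA (A := A) hm
          omega
        have hfree : UB.card < m - pref A m ∨ UC.card < m - pref A m := by
          by_contra hcon
          push_neg at hcon
          have h1 : UB.card ≤ m - pref A m := by rw [← hNAcard]; exact card_le_card hUBs
          have h2 : UC.card ≤ m - pref A m := by rw [← hNAcard]; exact card_le_card hUCs
          have hp : pref A m ≤ m := by
            have := pref_add_nonA (A := A) hm; omega
          omega
        -- helper to build the updated data on one side
        rcases hfree with hfB | hfC
        · -- extend the B side
          obtain ⟨v, hv⟩ : (univ.filter (fun k : Fin n => (k:ℕ) < m ∧ k ∉ A) \ UB).Nonempty := by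
            rw [← card_pos, card_sdiff_of_subset hUBs]
            omega
          rw [mem_sdiff] at hv
          have hvNA := hv.1
          have hvUB := hv.2
          simp only [mem_filter, mem_univ, true_and] at hvNA
          refine ⟨T, insert a AB, AC, insert v UB, UC, Function.update φB a v, φC,
            ?_, ?_, hTC, ?_, ?_, ?_, ?_, hUCim, ?_, hCinj, ?_, hClt, ?_, hc2⟩
          · rw [hfilt A, if_pos haA, ← hun]
            rw [union_insert, insert_union]
          · exact disjoint_insert_right.2 ⟨haT, hTB⟩
          · rw [disjoint_insert_left]
            exact ⟨haC, hBC⟩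
          · intro k hk
            rcases mem_insert.1 hk with rfl | hk'
            · apply hNAmono
              simp only [mem_filter, mem_univ, true_and]
              exact hvNA
            · exact hNAmono (hUBs hk')
          · exact subset_trans hUCs hNAmono
          · rw [image_insert, Function.update_self]
            congr 1
            rw [← hUBim]
            apply image_congr
            intro b hb
            rw [mem_coe] at hb
            exact Function.update_of_ne (hneB b hb) v φB
          · -- InjOn for updated function
            intro p hp q hq hpq
            simp only [coe_insert, Set.mem_insert_iff, mem_coe] at hp hq
            rcases hp with rfl | hp <;> rcases hq with rfl | hq
            · rfl
            · exfalso
              rw [Function.update_self] at hpq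
              rw [Function.update_of_ne (hneB q hq)] at hpq
              apply hvUB
              rw [← hUBim]
              exact mem_image.2 ⟨q, hq, hpq.symm⟩
            · exfalso
              rw [Function.update_self] at hpq
              rw [Function.update_of_ne (hneB p hp)] at hpq
              apply hvUB
              rw [← hUBim]
              exact mem_image.2 ⟨p, hp, hpq⟩
            · rw [Function.update_of_ne (hneB p hp),
                Function.update_of_ne (hneB q hq)] at hpq
              exact hBinj hp hq hpq
          · intro b hb
            rcases mem_insert.1 hb with rfl | hb'
            · rw [Function.update_self]
              show (v : Fin n) < a
              have : (v:ℕ) < m := hvNA.1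
              exact Fin.lt_def.2 (by omega)
            · rw [Function.update_of_ne (hneB b hb')]
              exact hBlt b hb'
          · rw [hpref1]
            omega
        · -- extend the C side (symmetric)
          obtain ⟨v, hv⟩ : (univ.filter (fun k : Fin n => (k:ℕ) < m ∧ k ∉ A) \ UC).Nonempty := by
            rw [← card_pos, card_sdiff_of_subset hUCs]
            omega
          rw [mem_sdiff] at hv
          have hvNA := hv.1
          have hvUC := hv.2
          simp only [mem_filter, mem_univ, true_and] at hvNA
          refine ⟨T, AB, insert a AC, UB, insert v UC, φB, Function.update φC a v,
            ?_, hTB, ?_, ?_, ?_, ?_, hUBim, ?_, hBinj, ?_, hBlt, ?_, ?_, hc2⟩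
          · rw [hfilt A, if_pos haA, ← hun]
            rw [union_insert]
          · exact disjoint_insert_right.2 ⟨haT, hTC⟩
          · rw [disjoint_insert_right]
            exact ⟨haB, hBC⟩
          · exact subset_trans hUBs hNAmono
          · intro k hk
            rcases mem_insert.1 hk with rfl | hk'
            · apply hNAmono
              simp only [mem_filter, mem_univ, true_and]
              exact hvNA
            · exact hNAmono (hUCs hk')
          · rw [image_insert, Function.update_self]
            congr 1
            rw [← hUCim]
            apply image_congr
            intro b hb
            rw [mem_coe] at hb
            exact Function.update_of_ne (hneC b hb) v φC
          · intro p hp q hq hpq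
            simp only [coe_insert, Set.mem_insert_iff, mem_coe] at hp hq
            rcases hp with rfl | hp <;> rcases hq with rfl | hq
            · rfl
            · exfalso
              rw [Function.update_self] at hpq
              rw [Function.update_of_ne (hneC q hq)] at hpq
              apply hvUC
              rw [← hUCim]
              exact mem_image.2 ⟨q, hq, hpq.symm⟩
            · exfalso
              rw [Function.update_self] at hpq
              rw [Function.update_of_ne (hneC p hp)] at hpq
              apply hvUC
              rw [← hUCim]
              exact mem_image.2 ⟨p, hp, hpq⟩
            · rw [Function.update_of_ne (hneC p hp),
                Function.update_of_ne (hneC q hq)] at hpq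
              exact hCinj hp hq hpq
          · intro b hb
            rcases mem_insert.1 hb with rfl | hb'
            · rw [Function.update_self]
              show (v : Fin n) < a
              have : (v:ℕ) < m := hvNA.1
              exact Fin.lt_def.2 (by omega)
            · rw [Function.update_of_ne (hneC b hb')]
              exact hClt b hb'
          · rw [hpref1]
            omega
      · -- tight : add to the exceptional set T
        refine ⟨insert a T, AB, AC, UB, UC, φB, φC, ?_, ?_, ?_, hBC,
          subset_trans hUBs hNAmono, subset_trans hUCs hNAmono, hUBim, hUCim,
          hBinj, hCinj, hBlt, hClt, ?_, ?_⟩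
        · rw [hfilt A, if_pos haA, ← hun]
          rw [insert_union, insert_union]
        · exact disjoint_insert_left.2 ⟨haB, hTB⟩
        · exact disjoint_insert_left.2 ⟨haC, hTC⟩
        · rw [hpref1, card_insert_of_notMem haT]
          omega
        · have hh := h (m+1) hm1
          rw [hpref1] at hh
          rw [card_insert_of_notMem haT]
          omega
    · -- a ∉ A : nothing changes
      have hpref1 : pref A (m+1) = pref A m := by
        unfold pref
        rw [hfilt A, if_neg haA]
      refine ⟨T, AB, AC, UB, UC, φB, φC, ?_, hTB, hTC, hBC,
        subset_trans hUBs hNAmono, subset_trans hUCs hNAmono, hUBim, hUCim,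
        hBinj, hCinj, hBlt, hClt, ?_, hc2⟩
      · rw [hfilt A, if_neg haA, ← hun]
      · rw [hpref1]
        omega

lemma moveAll {G : Finset (Finset (Fin n))} (hG : Shifted G) (A : Finset (Fin n)) (hA : A ∈ G)
    (f : Fin n → Fin n) :
    ∀ S : Finset (Fin n), S ⊆ A → Set.InjOn f S → (∀ a ∈ S, f a < a ∧ f a ∉ A) →
    (A \ S) ∪ S.image f ∈ G := by
  classical
  intro S
  induction S using Finset.induction_on with
  | empty =>
    intro _ _ _
    simpa using hA
  | insert a S ha hins =>
    intro hsub hinj hprop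
    have hSsub : S ⊆ A := fun k hk => hsub (mem_insert_of_mem hk)
    have hSinj : Set.InjOn f S := hinj.mono (by rw [coe_insert]; exact Set.subset_insert _ _)
    have hSprop : ∀ b ∈ S, f b < b ∧ f b ∉ A := fun b hb => hprop b (mem_insert_of_mem hb)
    have hX : (A \ S) ∪ S.image f ∈ G := hins hSsub hSinj hSprop
    have haA : a ∈ A := hsub (mem_insert_self a S)
    have hfa := hprop a (mem_insert_self a S)
    have haX : a ∈ (A \ S) ∪ S.image f := by
      apply mem_union_left
      rw [mem_sdiff]
      exact ⟨haA, ha⟩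
    have hfaX : f a ∉ (A \ S) ∪ S.image f := by
      rw [mem_union]
      rintro (hc | hc)
      · exact hfa.2 (mem_sdiff.1 hc).1
      · obtain ⟨b, hb, hba⟩ := mem_image.1 hc
        have : b = a := hinj (by simp [hb]) (by simp) hba
        exact ha (this ▸ hb)
    have hkey := hG _ hX a haX (f a) hfa.1 hfaX
    have heq : insert (f a) (((A \ S) ∪ S.image f).erase a) =
        (A \ insert a S) ∪ (insert a S).image f := by
      ext k
      simp only [mem_insert, mem_erase, mem_union, mem_sdiff, mem_image]
      constructor
      · rintro (rfl | ⟨hka, (⟨hkA, hkS⟩ | ⟨b, hb, rfl⟩)⟩)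
        · exact Or.inr ⟨a, Or.inl rfl, rfl⟩
        · exact Or.inl ⟨hkA, by simp [hka, hkS]⟩
        · exact Or.inr ⟨b, Or.inr hb, rfl⟩
      · rintro (⟨hkA, hkS⟩ | ⟨b, hb, rfl⟩)
        · push_neg at hkS
          exact Or.inr ⟨hkS.1, Or.inl ⟨hkA, hkS.2⟩⟩
        · rcases hb with rfl | hbS
          · exact Or.inl rfl
          · refine Or.inr ⟨?_, Or.inr ⟨b, hbS, rfl⟩⟩
            intro hc
            exact (hprop b (mem_insert_of_mem hbS)).2 (hc ▸ haA)
    rw [← heq]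
    exact hkey

lemma walk_reach {G : Finset (Finset (Fin n))} (hG : Shifted G) {t : ℕ} (hI : Int3 t G)
    {A : Finset (Fin n)} (hA : A ∈ G) : ∃ m, m ≤ n ∧ 2*m + t ≤ 3 * pref A m := by
  classical
  by_contra hcon
  push_neg at hcon
  have h : ∀ m : ℕ, m ≤ n → 3 * pref A m + 1 ≤ 2*m + t := by
    intro m hm
    have := hcon m hm
    omega
  obtain ⟨T, AB, AC, UB, UC, φB, φC, hun, hTB, hTC, hBC, hUBs, hUCs, hUBim, hUCim,
    hBinj, hCinj, hBlt, hClt, hc1, hc2⟩ := matching_aux A t h n le_rfl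
  have hfA : A.filter (fun k : Fin n => (k:ℕ) < n) = A := by
    apply filter_true_of_mem
    intro k _
    exact k.isLt
  rw [hfA] at hun
  have hBsub : AB ⊆ A := by
    rw [← hun]
    intro k hk
    exact mem_union_left _ (mem_union_right _ hk)
  have hCsub : AC ⊆ A := by
    rw [← hun]
    intro k hk
    exact mem_union_right _ hk
  have hBnotA : ∀ a ∈ AB, φB a ∉ A := by
    intro a haB hc
    have : φB a ∈ UB := by
      rw [← hUBim]
      exact mem_image_of_mem φB haB
    have := (mem_filter.1 (hUBs this)).2.2
    exact this hc
  have hCnotA : ∀ a ∈ AC, φC a ∉ A := by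
    intro a haC hc
    have : φC a ∈ UC := by
      rw [← hUCim]
      exact mem_image_of_mem φC haC
    have := (mem_filter.1 (hUCs this)).2.2
    exact this hc
  have hB : (A \ AB) ∪ AB.image φB ∈ G :=
    moveAll hG A hA φB AB hBsub hBinj (fun a ha => ⟨hBlt a ha, hBnotA a ha⟩)
  have hC : (A \ AC) ∪ AC.image φC ∈ G :=
    moveAll hG A hA φC AC hCsub hCinj (fun a ha => ⟨hClt a ha, hCnotA a ha⟩)
  have hsub : A ∩ ((A \ AB) ∪ AB.image φB) ∩ ((A \ AC) ∪ AC.image φC) ⊆ T := by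
    intro k hk
    simp only [mem_inter, mem_union, mem_sdiff, mem_image] at hk
    obtain ⟨⟨hkA, hkB⟩, hkC⟩ := hk
    have hkAB : k ∉ AB := by
      rcases hkB with ⟨-, hnot⟩ | ⟨b, hb, rfl⟩
      · exact hnot
      · exact absurd hkA (hBnotA b hb)
    have hkAC : k ∉ AC := by
      rcases hkC with ⟨-, hnot⟩ | ⟨b, hb, rfl⟩
      · exact hnot
      · exact absurd hkA (hCnotA b hb)
    have : k ∈ T ∪ AB ∪ AC := hun.symm ▸ hkA
    rcases mem_union.1 this with hk' | hk'
    · rcases mem_union.1 hk' with hk'' | hk''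
      · exact hk''
      · exact absurd hk'' hkAB
    · exact absurd hk' hkAC
  have ht1 : t ≤ (A ∩ ((A \ AB) ∪ AB.image φB) ∩ ((A \ AC) ∪ AC.image φC)).card :=
    hI A hA _ hB _ hC
  have ht2 := card_le_card hsub
  omega


lemma count_reach_le : ∀ n t : ℕ,
    (((univ : Finset (Finset (Fin n))).filter (Reach t)).card : ℝ) ≤ 2^n * φ^t := by
  intro n
  induction n with
  | zero =>
    intro t
    cases t with
    | zero =>
      have h : ((univ : Finset (Finset (Fin 0))).filter (Reach 0)).card ≤ 1 := by
        calc _ ≤ (univ : Finset (Finset (Fin 0))).card := card_filter_le _ _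
        _ = 1 := by simp
      calc (((univ : Finset (Finset (Fin 0))).filter (Reach 0)).card : ℝ) ≤ 1 := by exact_mod_cast h
      _ = 2^0 * φ^0 := by norm_num
    | succ t =>
      have h : ((univ : Finset (Finset (Fin 0))).filter (Reach (t+1))) = ∅ := by
        ext A
        simp only [mem_filter, notMem_empty, iff_false]
        rintro ⟨-, m, hm, hle⟩
        interval_cases m
        simp [pref] at hle
      rw [h]
      simp only [card_empty, Nat.cast_zero]
      have := phi_pos
      positivity
  | succ n ih =>
    intro t
    cases t with
    | zero =>
      have h : ((univ : Finset (Finset (Fin (n+1)))).filter (Reach 0)).card ≤ 2^(n+1) := by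
        calc _ ≤ (univ : Finset (Finset (Fin (n+1)))).card := card_filter_le _ _
        _ = 2^(n+1) := by simp [card_univ]
      calc (((univ : Finset (Finset (Fin (n+1)))).filter (Reach 0)).card : ℝ) ≤ 2^(n+1) := by
            exact_mod_cast h
      _ = 2^(n+1) * φ^0 := by norm_num
    | succ t =>
      classical
      set S := ((univ : Finset (Finset (Fin (n+1)))).filter (Reach (t+1))) with hS
      have hsplit : S = S.filter (fun A => (0:Fin (n+1)) ∈ A) ∪
          S.filter (fun A => (0:Fin (n+1)) ∉ A) := by
        exact (filter_union_filter_not_eq _ S).symm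
      have hdisj : Disjoint (S.filter (fun A => (0:Fin (n+1)) ∈ A))
          (S.filter (fun A => (0:Fin (n+1)) ∉ A)) := by
        apply disjoint_filter_filter'
        exact disjoint_iff_inf_le.2 (fun A hA => hA.2 hA.1)
      have hcard : S.card = (S.filter (fun A => (0:Fin (n+1)) ∈ A)).card +
          (S.filter (fun A => (0:Fin (n+1)) ∉ A)).card := by
        rw [← card_union_of_disjoint hdisj, ← hsplit]
      have h1 : (S.filter (fun A => (0:Fin (n+1)) ∈ A)).card ≤
          ((univ : Finset (Finset (Fin n))).filter (Reach t)).card := by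
        apply card_le_card_of_injOn tl
        · intro A hA
          simp only [hS, mem_coe, mem_filter, mem_univ, true_and] at hA ⊢
          exact (reach_succ_mem A hA.2).1 hA.1
        · intro A hA B hB hAB
          simp only [hS, mem_filter, mem_univ, true_and, coe_filter, Set.mem_setOf_eq] at hA hB
          ext k
          induction k using Fin.cases with
          | zero => simp [hA.2, hB.2]
          | succ k' =>
            have := congrArg (fun s => k' ∈ s) hAB
            simpa [mem_tl] using this
      have h2 : (S.filter (fun A => (0:Fin (n+1)) ∉ A)).card ≤
          ((univ : Finset (Finset (Fin n))).filter (Reach (t+3))).card := by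
        apply card_le_card_of_injOn tl
        · intro A hA
          simp only [hS, mem_coe, mem_filter, mem_univ, true_and] at hA ⊢
          exact (reach_succ_not_mem A hA.2).1 hA.1
        · intro A hA B hB hAB
          simp only [hS, mem_filter, mem_univ, true_and, coe_filter, Set.mem_setOf_eq] at hA hB
          ext k
          induction k using Fin.cases with
          | zero => simp [hA.2, hB.2]
          | succ k' =>
            have := congrArg (fun s => k' ∈ s) hAB
            simpa [mem_tl] using this
      have hfin : (S.card : ℝ) ≤ 2^n * φ^t + 2^n * φ^(t+3) := by
        rw [hcard]
        push_cast
        exact add_le_add ((Nat.cast_le.2 h1).trans (ih t)) ((Nat.cast_le.2 h2).trans (ih (t+3)))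
      refine hfin.trans (le_of_eq ?_)
      have h3 : φ^(t+3) = φ^t * φ^3 := by ring
      have h1' : φ^(t+1) = φ^t * φ := by ring
      rw [h3, h1']
      linear_combination (2^n * φ^t) * phi_cubic


end ThreeWiseAgree

open ThreeWiseAgree Finset in
/-- Let `n` and `t` be positive integers with `n ≥ t`. Then every 3-wise
`t`-agreeing family `F ⊆ {0,1}^n` satisfies `|F| / 2^n ≤ ((√5 − 1)/2)^t`. -/
theorem threeWise_tAgreeing_bound (n t : ℕ) (hn : 0 < n) (ht : 0 < t)
    (hnt : t ≤ n)
    (F : Finset (Fin n → Bool))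
    (hF : ∀ a ∈ F, ∀ b ∈ F, ∀ c ∈ F,
      t ≤ (Finset.univ.filter (fun i : Fin n => a i = b i ∧ b i = c i)).card) :
    (F.card : ℝ) / 2 ^ n ≤ ((Real.sqrt 5 - 1) / 2) ^ t := by
  classical
  -- Step 1 : translate to finsets
  set F1 : Finset (Finset (Fin n)) := F.image bToSet with hF1
  have hcard1 : F1.card = F.card := card_image_of_injective F bToSet_inj
  have hAgr1 : Agr3 t F1 := by
    intro x hx y hy z hz
    obtain ⟨f, hf, rfl⟩ := mem_image.1 hx
    obtain ⟨g, hg, rfl⟩ := mem_image.1 hy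
    obtain ⟨h, hh, rfl⟩ := mem_image.1 hz
    rw [agr_bToSet]
    exact hF f hf g hg h hh
  -- Step 2 : compress to a down-set
  obtain ⟨F2, hAgr2, hcard2, hdown2⟩ := exists_down (msD F1) F1 le_rfl hAgr1
  -- Step 3 : complements form a 3-wise t-intersecting family
  set G1 : Finset (Finset (Fin n)) := F2.image compl with hG1
  have hcard3 : G1.card = F2.card := card_image_of_injective F2 compl_injective
  have hInt1 : Int3 t G1 := int3_of_down hdown2 hAgr2
  -- Step 4 : compress to a shifted family
  obtain ⟨G2, hInt2, hcard4, hshift2⟩ := exists_shifted (msS G1) G1 le_rfl hInt1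
  -- Step 5 : every member reaches t
  have hsub : G2 ⊆ (univ : Finset (Finset (Fin n))).filter (Reach t) := by
    intro A hA
    rw [mem_filter]
    exact ⟨mem_univ A, walk_reach hshift2 hInt2 hA⟩
  have hcount : ((univ : Finset (Finset (Fin n))).filter (Reach t)).card ≤
      ((univ : Finset (Finset (Fin n))).filter (Reach t)).card := le_refl _
  have hbound : ((G2.card : ℝ)) ≤ 2^n * ((Real.sqrt 5 - 1) / 2) ^ t :=
    le_trans (by exact_mod_cast card_le_card hsub) (count_reach_le n t)
  have hFcard : (F.card : ℝ) ≤ 2^n * ((Real.sqrt 5 - 1) / 2) ^ t := by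
    have : G2.card = F.card := by
      rw [hcard4, hcard3, hcard2, hcard1]
    rwa [this] at hbound
  rw [div_le_iff₀ (by positivity)]
  calc (F.card : ℝ) ≤ 2^n * ((Real.sqrt 5 - 1) / 2) ^ t := hFcard
  _ = ((Real.sqrt 5 - 1) / 2) ^ t * 2 ^ n := by ring
end

section
/- Let n and t be positive integers with n ≥ t. Then every 3-wise t-intersecting family F ⊆ {0,1}^n satisfies |F| / 2^n ≤ ((√5 − 1)/2)^t. -/
namespace Frankl3

open Finset UV
open scoped FinsetFamily

variable {n : ℕ}


/-- 3-wise `t`-intersecting family of finsets. -/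
def Inter3 (t : ℕ) (𝒜 : Finset (Finset (Fin n))) : Prop :=
  ∀ a ∈ 𝒜, ∀ b ∈ 𝒜, ∀ c ∈ 𝒜, t ≤ (a ∩ b ∩ c).card

/-! ### Compression preserves 3-wise t-intersecting -/

lemma compress_singleton {i j : Fin n} (hij : i ≠ j) (x : Finset (Fin n)) :
    compress {i} {j} x = if i ∉ x ∧ j ∈ x then insert i (x.erase j) else x := by
  by_cases hcond : i ∉ x ∧ j ∈ x
  · rw [if_pos hcond]
    unfold compress
    rw [if_pos ⟨Finset.disjoint_singleton_left.2 hcond.1, Finset.singleton_subset_iff.2 hcond.2⟩,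
      Finset.sup_eq_union, Finset.union_comm, ← Finset.insert_eq,
      Finset.sdiff_singleton_eq_erase, Finset.erase_insert_of_ne hij]
  · rw [if_neg hcond]
    unfold compress
    rw [if_neg]
    rintro ⟨h1, h2⟩
    exact hcond ⟨Finset.disjoint_singleton_left.1 h1, Finset.singleton_subset_iff.1 h2⟩

/-- Origin lemma for elements of the compression containing `j`. -/
lemma mem_of_mem_compression_j {i j : Fin n} (hij : i ≠ j) {𝒜 : Finset (Finset (Fin n))}
    {x : Finset (Fin n)} (hx : x ∈ 𝓒 {i} {j} 𝒜) (hjx : j ∈ x) :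
    x ∈ 𝒜 ∧ (i ∈ x ∨ insert i (x.erase j) ∈ 𝒜) := by
  rw [mem_compression] at hx
  obtain ⟨hx𝒜, hcx⟩ | ⟨hx𝒜, b, hb, hcb⟩ := hx
  · refine ⟨hx𝒜, ?_⟩
    by_cases hi : i ∈ x
    · exact Or.inl hi
    · rw [compress_singleton hij, if_pos ⟨hi, hjx⟩] at hcx
      exact Or.inr hcx
  · exfalso
    rw [compress_singleton hij] at hcb
    split_ifs at hcb with h
    · subst hcb
      simp only [Finset.mem_insert, Finset.mem_erase] at hjx
      rcases hjx with h1 | h1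
      · exact hij h1.symm
      · exact h1.1 rfl
    · exact hx𝒜 (hcb ▸ hb)

/-- Origin lemma for elements of the compression not in the original family. -/
lemma moved_of_mem_compression {i j : Fin n} (hij : i ≠ j) {𝒜 : Finset (Finset (Fin n))}
    {x : Finset (Fin n)} (hx : x ∈ 𝓒 {i} {j} 𝒜) (hx𝒜 : x ∉ 𝒜) :
    i ∈ x ∧ j ∉ x ∧ insert j (x.erase i) ∈ 𝒜 := by
  rw [mem_compression] at hx
  obtain ⟨hx', _⟩ | ⟨_, b, hb, hcb⟩ := hx
  · exact absurd hx' hx𝒜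
  rw [compress_singleton hij] at hcb
  split_ifs at hcb with h
  · obtain ⟨hib, hjb⟩ := h
    subst hcb
    have hie : i ∉ b.erase j := fun h' => hib (Finset.mem_of_mem_erase h')
    refine ⟨Finset.mem_insert_self _ _, ?_, ?_⟩
    · simp only [Finset.mem_insert, Finset.mem_erase]
      rintro (h1 | h1)
      · exact hij h1.symm
      · exact h1.1 rfl
    · have h2 : (insert i (b.erase j)).erase i = b.erase j := Finset.erase_insert hie
      rw [h2, Finset.insert_erase hjb]
      exact hb
  · exact absurd (hcb ▸ hb) hx𝒜

/-- Counting lemma. -/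
lemma card_le_of_almost_subset {i j : Fin n} {W T : Finset (Fin n)}
    (hoff : ∀ y ∈ W, y ≠ i → y ≠ j → y ∈ T) (hiW : i ∉ W)
    (hjW : j ∈ W → i ∈ T) : W.card ≤ T.card := by
  by_cases hj : j ∈ W
  · have hiT := hjW hj
    have h1 : W.erase j ⊆ T.erase i := by
      intro y hy
      obtain ⟨hyj, hyW⟩ := Finset.mem_erase.1 hy
      have hyi : y ≠ i := fun h => hiW (h ▸ hyW)
      exact Finset.mem_erase.2 ⟨hyi, hoff y hyW hyi hyj⟩
    have h2 := Finset.card_le_card h1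
    have e1 := Finset.card_erase_add_one hj
    have e2 := Finset.card_erase_add_one hiT
    omega
  · apply Finset.card_le_card
    intro y hy
    have hyi : y ≠ i := fun h => hiW (h ▸ hy)
    have hyj : y ≠ j := fun h => hj (h ▸ hy)
    exact hoff y hy hyi hyj

lemma inter3_compression {i j : Fin n} (hij : i ≠ j) {t : ℕ} {𝒜 : Finset (Finset (Fin n))}
    (h : Inter3 t 𝒜) : Inter3 t (𝓒 {i} {j} 𝒜) := by
  classical
  intro a ha b hb c hc
  by_cases hall : a ∈ 𝒜 ∧ b ∈ 𝒜 ∧ c ∈ 𝒜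
  · exact h a hall.1 b hall.2.1 c hall.2.2
  -- choose origins
  set o : Finset (Fin n) → Finset (Fin n) := fun x =>
    if x ∈ 𝒜 then (if j ∈ x ∧ i ∉ x then insert i (x.erase j) else x)
    else insert j (x.erase i) with ho_def
  have ho : ∀ x, x ∈ 𝓒 {i} {j} 𝒜 → o x ∈ 𝒜 := by
    intro x hx
    by_cases hx𝒜 : x ∈ 𝒜
    · by_cases hc' : j ∈ x ∧ i ∉ x
      · have h1 := mem_of_mem_compression_j hij hx hc'.1
        rcases h1.2 with h2 | h2
        · exact absurd h2 hc'.2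
        · simpa [ho_def, hx𝒜, hc'] using h2
      · simpa [ho_def, hx𝒜, hc'] using hx𝒜
    · have h1 := moved_of_mem_compression hij hx hx𝒜
      simpa [ho_def, hx𝒜] using h1.2.2
  have hoff : ∀ x, ∀ y : Fin n, y ≠ i → y ≠ j → (y ∈ o x ↔ y ∈ x) := by
    intro x y hyi hyj
    simp only [ho_def]
    split_ifs <;> simp [Finset.mem_insert, Finset.mem_erase, hyi, hyj]
  have hjo : ∀ x, x ∈ 𝓒 {i} {j} 𝒜 → j ∈ o x → i ∈ x := by
    intro x hx hjox
    by_cases hx𝒜 : x ∈ 𝒜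
    · by_cases hc' : j ∈ x ∧ i ∉ x
      · exfalso
        simp only [ho_def, if_pos hx𝒜, if_pos hc'] at hjox
        simp only [Finset.mem_insert, Finset.mem_erase] at hjox
        rcases hjox with h1 | h1
        · exact hij h1.symm
        · exact h1.1 rfl
      · simp only [ho_def, if_pos hx𝒜, if_neg hc'] at hjox
        by_contra hi'
        exact hc' ⟨hjox, hi'⟩
    · exact (moved_of_mem_compression hij hx hx𝒜).1
  -- the moved element's origin avoids i
  have hio : ∀ x, x ∉ 𝒜 → i ∉ o x := by
    intro x hx𝒜
    simp only [ho_def, if_neg hx𝒜]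
    simp only [Finset.mem_insert, Finset.mem_erase]
    rintro (h1 | h1)
    · exact hij h1
    · exact h1.1 rfl
  have key : t ≤ (o a ∩ o b ∩ o c).card := h _ (ho a ha) _ (ho b hb) _ (ho c hc)
  refine le_trans key (card_le_of_almost_subset (i := i) (j := j) ?_ ?_ ?_)
  · intro y hy hyi hyj
    simp only [Finset.mem_inter] at hy ⊢
    exact ⟨⟨(hoff a y hyi hyj).1 hy.1.1, (hoff b y hyi hyj).1 hy.1.2⟩,
      (hoff c y hyi hyj).1 hy.2⟩
  · -- i not in intersection of origins
    rcases not_and_or.1 hall with hx | hx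
    · intro hiW
      simp only [Finset.mem_inter] at hiW
      exact hio a hx hiW.1.1
    rcases not_and_or.1 hx with hx' | hx'
    · intro hiW
      simp only [Finset.mem_inter] at hiW
      exact hio b hx' hiW.1.2
    · intro hiW
      simp only [Finset.mem_inter] at hiW
      exact hio c hx' hiW.2
  · intro hjW
    simp only [Finset.mem_inter] at hjW ⊢
    exact ⟨⟨hjo a ha hjW.1.1, hjo b hb hjW.1.2⟩, hjo c hc hjW.2⟩



/-! ### Iterated compression terminates -/

def fmeasure (𝒜 : Finset (Finset (Fin n))) : ℕ := ∑ A ∈ 𝒜, ∑ a ∈ A, 2 ^ (a : ℕ)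

lemma fmeasure_compression_lt {i j : Fin n} (hij : i < j) {𝒜 : Finset (Finset (Fin n))}
    (h : 𝓒 {i} {j} 𝒜 ≠ 𝒜) : fmeasure (𝓒 {i} {j} 𝒜) < fmeasure 𝒜 := by
  have hij' : i ≠ j := ne_of_lt hij
  rw [compression] at h ⊢
  have q : ∀ Q ∈ {A ∈ 𝒜 | compress {i} {j} A ∉ 𝒜}, compress {i} {j} Q ≠ Q := by
    simp_rw [mem_filter]
    intro Q hQ hQ2
    rw [hQ2] at hQ
    exact hQ.2 hQ.1
  have uA : {A ∈ 𝒜 | compress {i} {j} A ∈ 𝒜} ∪ {A ∈ 𝒜 | compress {i} {j} A ∉ 𝒜} = 𝒜 :=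
    filter_union_filter_not_eq _ _
  have ne₂ : {A ∈ 𝒜 | compress {i} {j} A ∉ 𝒜}.Nonempty := by
    refine nonempty_iff_ne_empty.2 fun z => h ?_
    rw [filter_image, z, image_empty, union_empty]
    rwa [z, union_empty] at uA
  rw [fmeasure, fmeasure, sum_union compress_disjoint]
  conv_rhs => rw [← uA]
  rw [sum_union (disjoint_filter_filter_not _ _ _), add_lt_add_iff_left, filter_image,
    sum_image compress_injOn]
  refine sum_lt_sum_of_nonempty ne₂ fun A hA => ?_
  have hne := q A hA
  rw [compress_singleton hij'] at hne ⊢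
  have hcond : i ∉ A ∧ j ∈ A := by
    by_contra hcon
    rw [if_neg hcon] at hne
    exact hne rfl
  rw [if_pos hcond]
  have hiA : i ∉ A.erase j := fun h' => hcond.1 (Finset.mem_of_mem_erase h')
  rw [Finset.sum_insert hiA]
  conv_rhs => rw [← Finset.insert_erase hcond.2, Finset.sum_insert (Finset.notMem_erase _ _)]
  have : (2:ℕ) ^ (i:ℕ) < 2 ^ (j:ℕ) := Nat.pow_lt_pow_right one_lt_two hij
  omega

lemma exists_fully_compressed (t : ℕ) :
    ∀ (N : ℕ) (𝒜 : Finset (Finset (Fin n))), fmeasure 𝒜 ≤ N → Inter3 t 𝒜 →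
    ∃ ℬ : Finset (Finset (Fin n)), ℬ.card = 𝒜.card ∧ Inter3 t ℬ ∧
      ∀ i j : Fin n, i < j → IsCompressed {i} {j} ℬ := by
  intro N
  induction N with
  | zero =>
    intro 𝒜 hm h𝒜
    by_cases hcomp : ∀ i j : Fin n, i < j → IsCompressed {i} {j} 𝒜
    · exact ⟨𝒜, rfl, h𝒜, hcomp⟩
    · push_neg at hcomp
      obtain ⟨i, j, hij, hnc⟩ := hcomp
      have := fmeasure_compression_lt hij hnc
      omega
  | succ N ih =>
    intro 𝒜 hm h𝒜
    by_cases hcomp : ∀ i j : Fin n, i < j → IsCompressed {i} {j} 𝒜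
    · exact ⟨𝒜, rfl, h𝒜, hcomp⟩
    · push_neg at hcomp
      obtain ⟨i, j, hij, hnc⟩ := hcomp
      have hlt := fmeasure_compression_lt hij hnc
      obtain ⟨ℬ, hcard, hint, hcc⟩ := ih (𝓒 {i} {j} 𝒜) (by omega)
        (inter3_compression (ne_of_lt hij) h𝒜)
      exact ⟨ℬ, hcard.trans (card_compression _ _ _), hint, hcc⟩



/-! ### Small counting facts -/

lemma card_filter_val_lt (m : ℕ) :
    ((univ : Finset (Fin n)).filter (fun i : Fin n => (i : ℕ) < m)).card = min m n := by
  classical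
  have h1 : ((univ : Finset (Fin n)).filter (fun i : Fin n => (i : ℕ) < m)).card
      = (((Finset.range n).filter (fun v => v < m))).card := by
    apply Finset.card_bij (fun (i : Fin n) _ => (i : ℕ))
    · intro i hi
      simp only [Finset.mem_filter, Finset.mem_range]
      exact ⟨i.isLt, (Finset.mem_filter.1 hi).2⟩
    · intro i _ j _ hij
      exact Fin.val_injective hij
    · intro v hv
      simp only [Finset.mem_filter, Finset.mem_range] at hv
      exact ⟨⟨v, hv.1⟩, by simp [hv.2], rfl⟩
  rw [h1]
  have h2 : (Finset.range n).filter (fun v => v < m) = Finset.range (min m n) := by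
    ext v
    simp only [Finset.mem_filter, Finset.mem_range]
    omega
  rw [h2, Finset.card_range]

lemma card_filter_lt_fin (x : Fin n) :
    ((univ : Finset (Fin n)).filter (fun y : Fin n => y < x)).card = (x : ℕ) := by
  have h : ((univ : Finset (Fin n)).filter (fun y : Fin n => y < x))
      = (univ : Finset (Fin n)).filter (fun y : Fin n => (y : ℕ) < (x : ℕ)) := by
    apply Finset.filter_congr
    intro y _
    exact Fin.lt_def
  rw [h, card_filter_val_lt]
  have := x.isLt
  omega

lemma orderEmbOfFin_lt_of_card {s : Finset (Fin n)} {x : Fin n} (j : Fin s.card)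
    (hj : (j : ℕ) < (s.filter (fun y : Fin n => y < x)).card) :
    s.orderEmbOfFin rfl j < x := by
  by_contra hle
  rw [not_lt] at hle
  have hsub : s.filter (fun y : Fin n => y < x) ⊆
      (univ.filter (fun i : Fin s.card => i < j)).image (s.orderEmbOfFin rfl) := by
    intro y hy
    rw [Finset.mem_filter] at hy
    have hys : y ∈ Set.range (s.orderEmbOfFin rfl) := by
      rw [Finset.range_orderEmbOfFin]
      exact hy.1
    obtain ⟨k, hk⟩ := hys
    rw [Finset.mem_image]
    refine ⟨k, ?_, hk⟩
    rw [Finset.mem_filter]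
    refine ⟨Finset.mem_univ _, ?_⟩
    have hlt : (s.orderEmbOfFin rfl) k < (s.orderEmbOfFin rfl) j := by
      rw [hk]
      exact lt_of_lt_of_le hy.2 hle
    exact (OrderEmbedding.lt_iff_lt _).1 hlt
  have h1 := Finset.card_le_card hsub
  have h2 := Finset.card_image_le (f := s.orderEmbOfFin rfl)
    (s := univ.filter (fun i : Fin s.card => i < j))
  have h3 : (univ.filter (fun i : Fin s.card => i < j)).card = (j : ℕ) :=
    card_filter_lt_fin j
  omega

/-! ### Moving elements down stays in a fully compressed family -/

lemma exch {G : Finset (Finset (Fin n))}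
    (hG : ∀ i j : Fin n, i < j → IsCompressed {i} {j} G) (f : Fin n → Fin n) :
    ∀ (S A : Finset (Fin n)), A ∈ G → S ⊆ A → (∀ x ∈ S, f x < x) →
      (∀ x ∈ S, f x ∉ A) → Set.InjOn f S → (A \ S) ∪ S.image f ∈ G := by
  intro S
  induction S using Finset.induction_on with
  | empty =>
    intro A hA _ _ _ _
    simpa using hA
  | @insert x S hxS ih =>
    intro A hA hSA hlt hout hinj
    have hxA : x ∈ A := hSA (mem_insert_self _ _)
    have hfx : f x < x := hlt x (mem_insert_self _ _)
    have hfxA : f x ∉ A := hout x (mem_insert_self _ _)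
    have hSA' : S ⊆ A := fun y hy => hSA (mem_insert_of_mem hy)
    have hfxS : f x ∉ S := fun h => hfxA (hSA' h)
    set A' := insert (f x) (A.erase x) with hA'def
    have hA'G : A' ∈ G := by
      have hcomp := (hG (f x) x hfx).eq
      have hmem := compress_mem_compression (u := ({f x} : Finset (Fin n)))
        (v := ({x} : Finset (Fin n))) (s := G) hA
      rw [hcomp, compress_singleton (ne_of_lt hfx) A, if_pos ⟨hfxA, hxA⟩] at hmem
      exact hmem
    have hS_sub : S ⊆ A' := by
      intro y hy
      have hyx : y ≠ x := fun h => hxS (h ▸ hy)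
      exact mem_insert_of_mem (Finset.mem_erase.2 ⟨hyx, hSA' hy⟩)
    have hout' : ∀ y ∈ S, f y ∉ A' := by
      intro y hy
      have h1 : f y ∉ A := hout y (mem_insert_of_mem hy)
      have h2 : f y ≠ f x := by
        intro h
        have h3 := hinj (by simp [hy] : (y : Fin n) ∈ (↑(insert x S) : Set (Fin n)))
          (by simp : (x : Fin n) ∈ (↑(insert x S) : Set (Fin n))) h
        exact hxS (h3 ▸ hy)
      simp only [hA'def, Finset.mem_insert, Finset.mem_erase]
      rintro (h | h)
      · exact h2 h
      · exact h1 h.2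
    have hres := ih A' hA'G hS_sub (fun y hy => hlt y (mem_insert_of_mem hy)) hout'
      (hinj.mono (by simp))
    have heq : (A' \ S) ∪ S.image f = (A \ insert x S) ∪ (insert x S).image f := by
      ext y
      simp only [hA'def, Finset.mem_union, Finset.mem_sdiff, Finset.mem_insert,
        Finset.mem_erase, Finset.mem_image]
      constructor
      · rintro (⟨h1, hyS⟩ | ⟨w, hw, hfw⟩)
        · rcases h1 with rfl | ⟨hyx, hyA⟩
          · exact Or.inr ⟨x, Or.inl rfl, rfl⟩
          · exact Or.inl ⟨hyA, by tauto⟩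
        · exact Or.inr ⟨w, Or.inr hw, hfw⟩
      · rintro (⟨hyA, hy2⟩ | ⟨w, hw, hfw⟩)
        · exact Or.inl ⟨Or.inr ⟨fun h => hy2 (Or.inl h), hyA⟩, fun h => hy2 (Or.inr h)⟩
        · rcases hw with rfl | hw
          · exact Or.inl ⟨Or.inl hfw.symm, by rw [← hfw]; exact hfxS⟩
          · exact Or.inr ⟨w, hw, hfw⟩
    rwa [heq] at hres

/-! ### The random walk lemma -/

lemma walk_lemma {t : ℕ} (ht : 1 ≤ t) {G : Finset (Finset (Fin n))}
    (hcomp : ∀ i j : Fin n, i < j → IsCompressed {i} {j} G)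
    (hG : Inter3 t G) {A : Finset (Fin n)} (hA : A ∈ G) :
    ∃ m ≤ n, 2 * m + t ≤ 3 * (A.filter (fun i : Fin n => (i : ℕ) < m)).card := by
  classical
  by_contra hcon
  push_neg at hcon
  set r : Fin n → ℕ := fun x => (A.filter (fun y : Fin n => y < x)).card with hr
  set Z : Finset (Fin n) := univ \ A with hZdef
  set z : Fin n → ℕ := fun x => (Z.filter (fun y : Fin n => y < x)).card with hzdef
  have hrz : ∀ x : Fin n, r x + z x = (x : ℕ) := by
    intro x
    have hdisj : Disjoint (A.filter (fun y : Fin n => y < x))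
        (Z.filter (fun y : Fin n => y < x)) :=
      Finset.disjoint_filter_filter (hZdef ▸ Finset.disjoint_sdiff)
    have hun : A.filter (fun y : Fin n => y < x) ∪ Z.filter (fun y : Fin n => y < x)
        = univ.filter (fun y : Fin n => y < x) := by
      rw [← Finset.filter_union, hZdef, Finset.union_sdiff_of_subset (Finset.subset_univ _)]
    have hcu := Finset.card_union_of_disjoint hdisj
    rw [hun, card_filter_lt_fin] at hcu
    have e1 : (A.filter (fun y : Fin n => y < x)).card = r x := rfl
    have e2 : (Z.filter (fun y : Fin n => y < x)).card = z x := rfl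
    omega
  have hkey : ∀ x ∈ A, r x + 2 ≤ 2 * z x + t := by
    intro x hx
    have h1 := hcon ((x : ℕ) + 1) (by omega)
    have h2 : A.filter (fun i : Fin n => (i : ℕ) < (x : ℕ) + 1)
        = insert x (A.filter (fun y : Fin n => y < x)) := by
      ext y
      simp only [Finset.mem_filter, Finset.mem_insert, Fin.lt_def]
      constructor
      · rintro ⟨hyA, hy⟩
        rcases Nat.lt_succ_iff_lt_or_eq.1 hy with h | h
        · exact Or.inr ⟨hyA, h⟩
        · exact Or.inl (Fin.val_injective h)
      · rintro (rfl | ⟨hyA, hy⟩)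
        · exact ⟨hx, by omega⟩
        · exact ⟨hyA, by omega⟩
    have hxnot : x ∉ A.filter (fun y : Fin n => y < x) := by
      simp [Finset.mem_filter]
    rw [h2, Finset.card_insert_of_notMem hxnot] at h1
    have e1 : (A.filter (fun y : Fin n => y < x)).card = r x := rfl
    have h3 := hrz x
    omega
  have hrmono : ∀ x y : Fin n, x ∈ A → x < y → r x < r y := by
    intro x y hx hxy
    have hsub : A.filter (fun w : Fin n => w < x) ⊆ A.filter (fun w : Fin n => w < y) :=
      Finset.monotone_filter_right _ (fun w _ hw => lt_trans hw hxy)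
    have hmem : x ∈ A.filter (fun w : Fin n => w < y) := Finset.mem_filter.2 ⟨hx, hxy⟩
    have hnot : x ∉ A.filter (fun w : Fin n => w < x) := by simp
    exact Finset.card_lt_card ((Finset.ssubset_iff_of_subset hsub).2 ⟨x, hmem, hnot⟩)
  have hinjr : Set.InjOn r A := by
    intro x hx y hy heq
    by_contra hne
    have hne' : x ≠ y := hne
    rcases lt_or_gt_of_ne hne' with h | h
    · exact absurd heq (ne_of_lt (hrmono x y (Finset.mem_coe.1 hx) h))
    · exact absurd heq.symm (ne_of_lt (hrmono y x (Finset.mem_coe.1 hy) h))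
  have hkept : (A.filter (fun x : Fin n => r x + 1 < t)).card ≤ t - 1 := by
    have hmap : ∀ x ∈ A.filter (fun x : Fin n => r x + 1 < t), r x ∈ Finset.range (t - 1) := by
      intro x hx
      rw [Finset.mem_range]
      have := (Finset.mem_filter.1 hx).2
      omega
    have hinj2 : Set.InjOn r (A.filter (fun x : Fin n => r x + 1 < t)) :=
      hinjr.mono (Finset.coe_subset.2 (Finset.filter_subset _ _))
    have := Finset.card_le_card_of_injOn r hmap hinj2
    simpa using this
  have hidxlt : ∀ x ∈ A, t ≤ r x + 1 → (r x + 1 - t) / 2 < z x := by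
    intro x hx hex
    have := hkey x hx
    omega
  have hzZ : ∀ x : Fin n, z x ≤ Z.card := fun x => Finset.card_filter_le _ _
  set tgt : Fin n → Fin n := fun x =>
    if h : (r x + 1 - t) / 2 < Z.card then Z.orderEmbOfFin rfl ⟨(r x + 1 - t) / 2, h⟩ else x
    with htgtdef
  have htgtZ : ∀ x ∈ A, t ≤ r x + 1 → tgt x ∈ Z := by
    intro x hx hex
    have h1 : (r x + 1 - t) / 2 < Z.card := lt_of_lt_of_le (hidxlt x hx hex) (hzZ x)
    simp only [htgtdef, dif_pos h1]
    exact Finset.orderEmbOfFin_mem _ _ _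
  have htgtlt : ∀ x ∈ A, t ≤ r x + 1 → tgt x < x := by
    intro x hx hex
    have h1 : (r x + 1 - t) / 2 < Z.card := lt_of_lt_of_le (hidxlt x hx hex) (hzZ x)
    simp only [htgtdef, dif_pos h1]
    exact orderEmbOfFin_lt_of_card _ (hidxlt x hx hex)
  have htgtA : ∀ x ∈ A, t ≤ r x + 1 → tgt x ∉ A := by
    intro x hx hex
    have h1 := htgtZ x hx hex
    rw [hZdef] at h1
    exact (Finset.mem_sdiff.1 h1).2
  have htinj : ∀ p : ℕ,
      Set.InjOn tgt (A.filter (fun x : Fin n => t ≤ r x + 1 ∧ (r x + 1 - t) % 2 = p)) := by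
    intro p x hx y hy heq
    have hx' := Finset.mem_filter.1 (Finset.mem_coe.1 hx)
    have hy' := Finset.mem_filter.1 (Finset.mem_coe.1 hy)
    have h1 : (r x + 1 - t) / 2 < Z.card :=
      lt_of_lt_of_le (hidxlt x hx'.1 hx'.2.1) (hzZ x)
    have h2 : (r y + 1 - t) / 2 < Z.card :=
      lt_of_lt_of_le (hidxlt y hy'.1 hy'.2.1) (hzZ y)
    simp only [htgtdef, dif_pos h1, dif_pos h2] at heq
    have h3 : ((r x + 1 - t) / 2 : ℕ) = (r y + 1 - t) / 2 :=
      congrArg Fin.val ((Z.orderEmbOfFin rfl).injective heq)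
    have h4 : r x = r y := by
      have hpx := hx'.2
      have hpy := hy'.2
      omega
    exact hinjr (Finset.mem_coe.2 hx'.1) (Finset.mem_coe.2 hy'.1) h4
  set SB := A.filter (fun x : Fin n => t ≤ r x + 1 ∧ (r x + 1 - t) % 2 = 0) with hSBdef
  set SC := A.filter (fun x : Fin n => t ≤ r x + 1 ∧ (r x + 1 - t) % 2 = 1) with hSCdef
  have hBmem : (A \ SB) ∪ SB.image tgt ∈ G := by
    apply exch hcomp tgt SB A hA (Finset.filter_subset _ _)
    · intro x hx
      have hx' := Finset.mem_filter.1 hx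
      exact htgtlt x hx'.1 hx'.2.1
    · intro x hx
      have hx' := Finset.mem_filter.1 hx
      exact htgtA x hx'.1 hx'.2.1
    · exact htinj 0
  have hCmem : (A \ SC) ∪ SC.image tgt ∈ G := by
    apply exch hcomp tgt SC A hA (Finset.filter_subset _ _)
    · intro x hx
      have hx' := Finset.mem_filter.1 hx
      exact htgtlt x hx'.1 hx'.2.1
    · intro x hx
      have hx' := Finset.mem_filter.1 hx
      exact htgtA x hx'.1 hx'.2.1
    · exact htinj 1
  have hint := hG A hA _ hBmem _ hCmem
  have hsub : A ∩ ((A \ SB) ∪ SB.image tgt) ∩ ((A \ SC) ∪ SC.image tgt)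
      ⊆ A.filter (fun x : Fin n => r x + 1 < t) := by
    intro y hy
    simp only [Finset.mem_inter] at hy
    obtain ⟨⟨hyA, hyB⟩, hyC⟩ := hy
    rw [Finset.mem_filter]
    refine ⟨hyA, ?_⟩
    by_contra hex
    push_neg at hex
    have hpar : (r y + 1 - t) % 2 = 0 ∨ (r y + 1 - t) % 2 = 1 := by omega
    rcases hpar with hp | hp
    · have hySB : y ∈ SB := Finset.mem_filter.2 ⟨hyA, hex, hp⟩
      rcases Finset.mem_union.1 hyB with h | h
      · exact (Finset.mem_sdiff.1 h).2 hySB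
      · obtain ⟨w, hw, hfw⟩ := Finset.mem_image.1 h
        have hw' := Finset.mem_filter.1 hw
        exact htgtA w hw'.1 hw'.2.1 (hfw ▸ hyA)
    · have hySC : y ∈ SC := Finset.mem_filter.2 ⟨hyA, hex, hp⟩
      rcases Finset.mem_union.1 hyC with h | h
      · exact (Finset.mem_sdiff.1 h).2 hySC
      · obtain ⟨w, hw, hfw⟩ := Finset.mem_image.1 h
        have hw' := Finset.mem_filter.1 hw
        exact htgtA w hw'.1 hw'.2.1 (hfw ▸ hyA)
  have hcard := Finset.card_le_card hsub
  omega



/-- The walk hits level `t`. -/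
def hitF (t : ℕ) (x : Fin n → Bool) : Prop :=
  ∃ m, m ≤ n ∧ 2 * m + t ≤ 3 * (univ.filter (fun i : Fin n => (i : ℕ) < m ∧ x i = true)).card

instance (t : ℕ) (x : Fin n → Bool) : Decidable (hitF t x) := by
  rw [show hitF t x ↔ (∃ m ∈ Finset.range (n + 1),
      2 * m + t ≤ 3 * (univ.filter (fun i : Fin n => (i : ℕ) < m ∧ x i = true)).card) from by
    simp [hitF, Nat.lt_succ_iff]]
  infer_instance

lemma card_cons (m : ℕ) (x : Fin (n + 1) → Bool) :
    (univ.filter (fun i : Fin (n + 1) => (i : ℕ) < m + 1 ∧ x i = true)).card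
      = (if x 0 = true then 1 else 0)
        + (univ.filter (fun i : Fin n => (i : ℕ) < m ∧ x i.succ = true)).card := by
  classical
  rw [Finset.card_filter, Fin.sum_univ_succ, Finset.card_filter]
  congr 1
  · simp
  · apply Finset.sum_congr rfl
    intro i _
    exact if_congr (by simp [Fin.val_succ, Nat.succ_lt_succ_iff]) rfl rfl

lemma hit_step_true {t : ℕ} (ht : 1 ≤ t) {x : Fin (n + 1) → Bool} (hx0 : x 0 = true)
    (h : hitF t x) : hitF (t - 1) (fun i : Fin n => x i.succ) := by
  obtain ⟨m, hm, hcard⟩ := h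
  match m, hm, hcard with
  | 0, hm, hcard =>
    exfalso
    have : (univ.filter (fun i : Fin (n+1) => (i : ℕ) < 0 ∧ x i = true)) = ∅ := by
      apply Finset.filter_false_of_mem
      intro i _
      simp
    rw [this] at hcard
    simp at hcard
    omega
  | m' + 1, hm, hcard =>
    rw [card_cons, if_pos hx0] at hcard
    refine ⟨m', by omega, ?_⟩
    show 2 * m' + (t - 1) ≤ 3 * (univ.filter (fun i : Fin n => (i : ℕ) < m' ∧ x i.succ = true)).card
    omega

lemma hit_step_false {t : ℕ} (ht : 1 ≤ t) {x : Fin (n + 1) → Bool} (hx0 : x 0 = false)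
    (h : hitF t x) : hitF (t + 2) (fun i : Fin n => x i.succ) := by
  obtain ⟨m, hm, hcard⟩ := h
  match m, hm, hcard with
  | 0, hm, hcard =>
    exfalso
    have : (univ.filter (fun i : Fin (n+1) => (i : ℕ) < 0 ∧ x i = true)) = ∅ := by
      apply Finset.filter_false_of_mem
      intro i _
      simp
    rw [this] at hcard
    simp at hcard
    omega
  | m' + 1, hm, hcard =>
    rw [card_cons, hx0] at hcard
    simp only [Bool.false_eq_true, if_false, zero_add] at hcard
    refine ⟨m', by omega, ?_⟩
    show 2 * m' + (t + 2) ≤ 3 * (univ.filter (fun i : Fin n => (i : ℕ) < m' ∧ x i.succ = true)).card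
    omega

lemma sqrt5_sq : Real.sqrt 5 ^ 2 = 5 := Real.sq_sqrt (by norm_num)

lemma alpha_nonneg : (0 : ℝ) ≤ (Real.sqrt 5 - 1) / 2 := by
  have h := sqrt5_sq
  have h2 := Real.sqrt_nonneg 5
  nlinarith

lemma alpha_id : ((Real.sqrt 5 - 1) / 2) ^ 3 + 1 = 2 * ((Real.sqrt 5 - 1) / 2) := by
  have h := sqrt5_sq
  linear_combination ((Real.sqrt 5 - 3) / 8) * h

lemma count_bound : ∀ (n t : ℕ),
    (((univ : Finset (Fin n → Bool)).filter (fun x => hitF t x)).card : ℝ)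
      ≤ ((Real.sqrt 5 - 1) / 2) ^ t * 2 ^ n := by
  intro n
  induction n with
  | zero =>
    intro t
    match t with
    | 0 =>
      have h1 : ((univ : Finset (Fin 0 → Bool)).filter (fun x => hitF 0 x)).card ≤ 1 := by
        calc _ ≤ (univ : Finset (Fin 0 → Bool)).card := Finset.card_filter_le _ _
        _ = 1 := by simp [Finset.card_univ]
      calc (((univ : Finset (Fin 0 → Bool)).filter (fun x => hitF 0 x)).card : ℝ)
          ≤ 1 := by exact_mod_cast h1
        _ = ((Real.sqrt 5 - 1) / 2) ^ 0 * 2 ^ 0 := by norm_num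
    | t + 1 =>
      have h1 : ((univ : Finset (Fin 0 → Bool)).filter (fun x => hitF (t+1) x)) = ∅ := by
        apply Finset.filter_false_of_mem
        intro x _
        rintro ⟨m, hm, hcard⟩
        interval_cases m
        have h2 : (univ.filter (fun i : Fin 0 => (i : ℕ) < 0 ∧ x i = true)) = ∅ := by
          apply Finset.eq_empty_of_forall_notMem
          intro i
          exact absurd i.isLt (by omega)
        rw [h2] at hcard
        simp at hcard
      rw [h1]
      simp only [Finset.card_empty, Nat.cast_zero]
      exact mul_nonneg (pow_nonneg alpha_nonneg _) (by positivity)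
  | succ n ih =>
    intro t
    match t with
    | 0 =>
      have h1 : ((univ : Finset (Fin (n+1) → Bool)).filter (fun x => hitF 0 x)).card
          ≤ 2 ^ (n + 1) := by
        calc _ ≤ (univ : Finset (Fin (n+1) → Bool)).card := Finset.card_filter_le _ _
          _ = 2 ^ (n + 1) := by simp [Finset.card_univ]
      calc (((univ : Finset (Fin (n+1) → Bool)).filter (fun x => hitF 0 x)).card : ℝ)
          ≤ 2 ^ (n + 1) := by exact_mod_cast h1
        _ = ((Real.sqrt 5 - 1) / 2) ^ 0 * 2 ^ (n+1) := by norm_num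
    | s + 1 =>
      -- split on first coordinate
      have hsplit : (univ : Finset (Fin (n+1) → Bool)).filter (fun x => hitF (s+1) x)
          ⊆ (univ.filter (fun x : Fin (n+1) → Bool =>
                x 0 = true ∧ hitF s (fun i : Fin n => x i.succ)))
            ∪ (univ.filter (fun x : Fin (n+1) → Bool =>
                x 0 = false ∧ hitF (s+3) (fun i : Fin n => x i.succ))) := by
        intro x hx
        have hx' := (Finset.mem_filter.1 hx).2
        rcases Bool.eq_false_or_eq_true (x 0) with h0 | h0
        · refine Finset.mem_union_left _ (Finset.mem_filter.2 ⟨Finset.mem_univ _, h0, ?_⟩)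
          have := hit_step_true (by omega) h0 hx'
          simpa using this
        · refine Finset.mem_union_right _ (Finset.mem_filter.2 ⟨Finset.mem_univ _, h0, ?_⟩)
          have := hit_step_false (by omega) h0 hx'
          simpa using this
      have h2 : (univ.filter (fun x : Fin (n+1) → Bool =>
            x 0 = true ∧ hitF s (fun i : Fin n => x i.succ))).card
          = (univ.filter (fun y : Fin n → Bool => hitF s y)).card := by
        apply Finset.card_bij (fun x _ => (fun i : Fin n => x i.succ))
        · intro x hx
          exact Finset.mem_filter.2 ⟨Finset.mem_univ _, (Finset.mem_filter.1 hx).2.2⟩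
        · intro x hx y hy hxy
          have hx' := (Finset.mem_filter.1 hx).2.1
          have hy' := (Finset.mem_filter.1 hy).2.1
          funext i
          refine Fin.cases ?_ ?_ i
          · rw [hx', hy']
          · intro k
            exact congrFun hxy k
        · intro y hy
          have hcons : (fun i : Fin n => (Fin.cons true y : Fin (n+1) → Bool) i.succ) = y := by
            funext i
            simp
          refine ⟨(Fin.cons true y : Fin (n+1) → Bool),
            Finset.mem_filter.2 ⟨Finset.mem_univ _, ?_, ?_⟩, hcons⟩
          · simp
          · rw [hcons]
            exact (Finset.mem_filter.1 hy).2
      have h3 : (univ.filter (fun x : Fin (n+1) → Bool =>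
            x 0 = false ∧ hitF (s+3) (fun i : Fin n => x i.succ))).card
          = (univ.filter (fun y : Fin n → Bool => hitF (s+3) y)).card := by
        apply Finset.card_bij (fun x _ => (fun i : Fin n => x i.succ))
        · intro x hx
          exact Finset.mem_filter.2 ⟨Finset.mem_univ _, (Finset.mem_filter.1 hx).2.2⟩
        · intro x hx y hy hxy
          have hx' := (Finset.mem_filter.1 hx).2.1
          have hy' := (Finset.mem_filter.1 hy).2.1
          funext i
          refine Fin.cases ?_ ?_ i
          · rw [hx', hy']
          · intro k
            exact congrFun hxy k
        · intro y hy
          have hcons : (fun i : Fin n => (Fin.cons false y : Fin (n+1) → Bool) i.succ) = y := by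
            funext i
            simp
          refine ⟨(Fin.cons false y : Fin (n+1) → Bool),
            Finset.mem_filter.2 ⟨Finset.mem_univ _, ?_, ?_⟩, hcons⟩
          · simp
          · rw [hcons]
            exact (Finset.mem_filter.1 hy).2
      have hcards := Finset.card_le_card hsplit
      have hun := Finset.card_union_le
        (univ.filter (fun x : Fin (n+1) → Bool =>
            x 0 = true ∧ hitF s (fun i : Fin n => x i.succ)))
        (univ.filter (fun x : Fin (n+1) → Bool =>
            x 0 = false ∧ hitF (s+3) (fun i : Fin n => x i.succ)))
      have htot : ((univ : Finset (Fin (n+1) → Bool)).filter (fun x => hitF (s+1) x)).card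
          ≤ (univ.filter (fun y : Fin n → Bool => hitF s y)).card
            + (univ.filter (fun y : Fin n → Bool => hitF (s+3) y)).card :=
        hcards.trans (hun.trans (le_of_eq (by rw [h2, h3])))
      have hihs := ih s
      have hihs3 := ih (s + 3)
      have key : ((Real.sqrt 5 - 1) / 2) ^ s * 2 ^ n + ((Real.sqrt 5 - 1) / 2) ^ (s+3) * 2 ^ n
          = ((Real.sqrt 5 - 1) / 2) ^ (s+1) * 2 ^ (n+1) := by
        have h := alpha_id
        linear_combination (((Real.sqrt 5 - 1) / 2) ^ s * 2 ^ n) * h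
      calc (((univ : Finset (Fin (n+1) → Bool)).filter (fun x => hitF (s+1) x)).card : ℝ)
          ≤ ((univ.filter (fun y : Fin n → Bool => hitF s y)).card : ℝ)
            + ((univ.filter (fun y : Fin n → Bool => hitF (s+3) y)).card : ℝ) := by
            exact_mod_cast htot
        _ ≤ ((Real.sqrt 5 - 1) / 2) ^ s * 2 ^ n + ((Real.sqrt 5 - 1) / 2) ^ (s+3) * 2 ^ n := by
            exact add_le_add hihs hihs3
        _ = ((Real.sqrt 5 - 1) / 2) ^ (s+1) * 2 ^ (n+1) := key


end Frankl3

/-- **Frankl's bound.** Let `n` and `t` be positive integers with `n ≥ t`.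
Then every 3-wise `t`-intersecting family `F ⊆ {0,1}^n` satisfies
`|F| / 2^n ≤ ((√5 − 1)/2)^t`. -/
theorem threeWise_tIntersecting_bound (n t : ℕ) (hn : 0 < n) (ht : 0 < t)
    (hnt : t ≤ n)
    (F : Finset (Fin n → Bool))
    (hF : ∀ a ∈ F, ∀ b ∈ F, ∀ c ∈ F,
      t ≤ (Finset.univ.filter
        (fun i : Fin n => a i = true ∧ b i = true ∧ c i = true)).card) :
    (F.card : ℝ) / 2 ^ n ≤ ((Real.sqrt 5 - 1) / 2) ^ t := by
  classical
  have hinj : Set.InjOn (fun x : Fin n → Bool =>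
      Finset.univ.filter (fun i => x i = true)) F := by
    intro x _ y _ hxy
    have hxy2 : Finset.univ.filter (fun i => x i = true)
        = Finset.univ.filter (fun i => y i = true) := hxy
    funext i
    have h1 : (x i = true) ↔ (y i = true) := by
      constructor
      · intro h
        have h2 : i ∈ Finset.univ.filter (fun i => y i = true) := by
          rw [← hxy2]
          exact Finset.mem_filter.2 ⟨Finset.mem_univ _, h⟩
        exact (Finset.mem_filter.1 h2).2
      · intro h
        have h2 : i ∈ Finset.univ.filter (fun i => x i = true) := by
          rw [hxy2]
          exact Finset.mem_filter.2 ⟨Finset.mem_univ _, h⟩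
        exact (Finset.mem_filter.1 h2).2
    cases hxi : x i <;> cases hyi : y i <;> simp_all
  set 𝒜 : Finset (Finset (Fin n)) :=
    F.image (fun x => Finset.univ.filter (fun i => x i = true)) with h𝒜
  have hcard𝒜 : 𝒜.card = F.card := Finset.card_image_of_injOn hinj
  have hI : Frankl3.Inter3 t 𝒜 := by
    intro a ha b hb c hc
    obtain ⟨x, hx, rfl⟩ := Finset.mem_image.1 ha
    obtain ⟨y, hy, rfl⟩ := Finset.mem_image.1 hb
    obtain ⟨z, hz, rfl⟩ := Finset.mem_image.1 hc
    have heq : (Finset.univ.filter (fun i => x i = true))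
        ∩ (Finset.univ.filter (fun i => y i = true))
        ∩ (Finset.univ.filter (fun i => z i = true))
        = Finset.univ.filter (fun i : Fin n => x i = true ∧ y i = true ∧ z i = true) := by
      ext i
      simp only [Finset.mem_inter, Finset.mem_filter, Finset.mem_univ, true_and]
      tauto
    rw [heq]
    exact hF x hx y hy z hz
  obtain ⟨ℬ, hBcard, hBI, hBcomp⟩ :=
    Frankl3.exists_fully_compressed t (Frankl3.fmeasure 𝒜) 𝒜 le_rfl hI
  have hsub2 : ∀ A ∈ ℬ, Frankl3.hitF t (fun i => decide (i ∈ A)) := by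
    intro A hAB
    obtain ⟨m, hm, hc2⟩ := Frankl3.walk_lemma ht hBcomp hBI hAB
    refine ⟨m, hm, ?_⟩
    have heqf : Finset.univ.filter (fun i : Fin n => (i : ℕ) < m ∧ decide (i ∈ A) = true)
        = A.filter (fun i : Fin n => (i : ℕ) < m) := by
      ext i
      simp only [Finset.mem_filter, Finset.mem_univ, true_and, decide_eq_true_eq]
      tauto
    rw [heqf]
    exact hc2
  have hinj2 : Set.InjOn (fun A : Finset (Fin n) => (fun i => decide (i ∈ A))) ℬ := by
    intro a _ b _ hab
    ext i
    have h3 := congrFun hab i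
    simpa using h3
  have hle : ℬ.card ≤ (Finset.univ.filter (fun x : Fin n → Bool => Frankl3.hitF t x)).card :=
    Finset.card_le_card_of_injOn _
      (fun A hAB => Finset.mem_filter.2 ⟨Finset.mem_univ _, hsub2 A hAB⟩) hinj2
  have hcnt := Frankl3.count_bound n t
  have hchain : (F.card : ℝ) ≤ ((Real.sqrt 5 - 1) / 2) ^ t * 2 ^ n := by
    have h4 : F.card ≤ (Finset.univ.filter (fun x : Fin n → Bool => Frankl3.hitF t x)).card := by
      omega
    calc (F.card : ℝ)
        ≤ ((Finset.univ.filter (fun x : Fin n → Bool => Frankl3.hitF t x)).card : ℝ) := by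
          exact_mod_cast h4
      _ ≤ ((Real.sqrt 5 - 1) / 2) ^ t * 2 ^ n := hcnt
  rw [div_le_iff₀ (by positivity : (0:ℝ) < (2:ℝ) ^ n)]
  exact hchain
end

section
/- Let n and t be positive integers with t ≤ n, and let F := {x ∈ {0,1}^n : the Hamming weight of x is at most (n − t)/2}. Then (1) F is a (pairwise) t-agreeing family, i.e., any two members of F agree on at least t coordinates, and (2) |F| ≥ 2^(n−1) − (t + 1) · C(n, ⌊n/2⌋). -/
/-- The Hamming weight of a boolean string. -/
def hammingWeight {n : ℕ} (x : Fin n → Bool) : ℕ :=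
  (Finset.univ.filter (fun i : Fin n => x i = true)).card

/-!
Two strings can only disagree where one of them is `1`, so strings of weight at most `(n - t)/2`
disagree on at most `n - t` coordinates. For the size, negation maps the strings of weight
`> n/2` injectively to those of weight `< n/2`, so at least `2^(n-1)` strings have weight
`≤ n/2`; of these, the ones outside `F` have one of at most `t + 1` weights, and each weight
class has at most `C(n, ⌊n/2⌋)` members.
-/

open Finset

section Agreement

variable {n : ℕ}

lemma card_ne_le_hammingWeight_add (a b : Fin n → Bool) :
    #{i | a i ≠ b i} ≤ hammingWeight a + hammingWeight b := by
  calc #{i | a i ≠ b i}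
      ≤ #(univ.filter (fun i => a i = true) ∪ univ.filter (fun i => b i = true)) := by
        refine card_le_card fun i => ?_
        simp only [mem_filter, mem_univ, true_and, mem_union]
        cases a i <;> cases b i <;> decide
    _ ≤ hammingWeight a + hammingWeight b := card_union_le _ _

lemma le_card_eq_of_two_mul_hammingWeight_le {t : ℕ} {a b : Fin n → Bool} (htn : t ≤ n)
    (ha : 2 * hammingWeight a ≤ n - t) (hb : 2 * hammingWeight b ≤ n - t) :
    t ≤ #{i | a i = b i} := by
  have split := card_filter_add_card_filter_not (s := univ) fun i : Fin n => a i = b i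
  rw [card_univ, Fintype.card_fin] at split
  have disagree := card_ne_le_hammingWeight_add a b
  simp only [ne_eq] at disagree
  omega

end Agreement

lemma hammingWeight_not {n : ℕ} (x : Fin n → Bool) :
    hammingWeight (fun i => !x i) = n - hammingWeight x := by
  have split := card_filter_add_card_filter_not (s := univ) fun i : Fin n => x i = true
  simp only [Bool.not_eq_true, card_univ, Fintype.card_fin] at split
  simp only [hammingWeight, Bool.not_eq_true']
  omega

lemma card_hammingWeight_eq (n k : ℕ) :
    #{x : Fin n → Bool | hammingWeight x = k} = n.choose k := by
  calc #{x : Fin n → Bool | hammingWeight x = k}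
      = #(powersetCard k (univ : Finset (Fin n))) := ?_
    _ = n.choose k := by simp
  refine card_bij' (fun x _ => univ.filter fun i => x i = true) (fun s _ i => decide (i ∈ s))
    (fun x hx => ?_) (fun s hs => ?_) (fun x _ => ?_) (fun s _ => ?_)
  · rw [mem_filter] at hx
    exact mem_powersetCard_univ.2 hx.2
  · rw [mem_powersetCard_univ] at hs
    rw [mem_filter, hammingWeight]
    simpa using hs
  · ext i
    simp
  · ext i
    simp

lemma card_hammingWeight_mem_le (n : ℕ) (s : Finset ℕ) :
    #{x : Fin n → Bool | hammingWeight x ∈ s} ≤ #s * n.choose (n / 2) := by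
  rw [card_eq_sum_card_fiberwise (f := hammingWeight) (t := s) fun x hx => by simpa using hx]
  refine sum_le_card_nsmul _ _ _ fun k _ => ?_
  calc #{x ∈ {x : Fin n → Bool | hammingWeight x ∈ s} | hammingWeight x = k}
      ≤ #{x : Fin n → Bool | hammingWeight x = k} :=
        card_le_card (filter_subset_filter _ (subset_univ _))
    _ = n.choose k := card_hammingWeight_eq n k
    _ ≤ n.choose (n / 2) := Nat.choose_le_middle k n

lemma two_pow_pred_le_card_two_mul_hammingWeight_le (n : ℕ) :
    2 ^ (n - 1) ≤ #{x : Fin n → Bool | 2 * hammingWeight x ≤ n} := by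
  have heavy_le_light : #{x : Fin n → Bool | ¬ 2 * hammingWeight x ≤ n}
      ≤ #{x : Fin n → Bool | 2 * hammingWeight x ≤ n} := by
    refine card_le_card_of_injOn (fun x i => !x i) (fun x hx => ?_) (fun x _ y _ h => ?_)
    · simp only [coe_filter, mem_univ, true_and, Set.mem_ofPred_eq, hammingWeight_not] at hx ⊢
      omega
    · funext i
      simpa using congrFun h i
  have total := card_filter_add_card_filter_not
    (s := (univ : Finset (Fin n → Bool))) (fun x => 2 * hammingWeight x ≤ n)
  rw [card_univ, Fintype.card_fun, Fintype.card_bool, Fintype.card_fin] at total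
  rcases n with _ | n
  · simp only [pow_zero] at total ⊢
    omega
  · rw [pow_succ] at total
    simp only [Nat.add_sub_cancel]
    omega

lemma card_two_mul_hammingWeight_le_le_add (n t : ℕ) :
    #{x : Fin n → Bool | 2 * hammingWeight x ≤ n}
      ≤ #{x : Fin n → Bool | 2 * hammingWeight x ≤ n - t} + (t + 1) * n.choose (n / 2) := by
  calc #{x : Fin n → Bool | 2 * hammingWeight x ≤ n}
      ≤ #{x : Fin n → Bool | 2 * hammingWeight x ≤ n - t}
        + #{x : Fin n → Bool | hammingWeight x ∈ Ioc ((n - t) / 2) (n / 2)} := by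
        rw [← card_union_of_disjoint (disjoint_filter.2 fun x _ h => by
          simp only [mem_Ioc, not_and, not_le] at h ⊢; omega)]
        exact card_le_card fun x => by
          simp only [mem_filter, mem_univ, true_and, mem_Ioc, mem_union]; omega
    _ ≤ #{x : Fin n → Bool | 2 * hammingWeight x ≤ n - t} + (t + 1) * n.choose (n / 2) := by
        grw [card_hammingWeight_mem_le, Nat.card_Ioc]
        gcongr
        omega

theorem lowWeight_tAgreeing_general (n t : ℕ) (hnt : t ≤ n) :
    (∀ a ∈ Finset.univ.filter
        (fun x : Fin n → Bool => 2 * hammingWeight x ≤ n - t),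
      ∀ b ∈ (Finset.univ.filter
        (fun x : Fin n → Bool => 2 * hammingWeight x ≤ n - t)),
      t ≤ (Finset.univ.filter (fun i : Fin n => a i = b i)).card) ∧
    2 ^ (n - 1) - (t + 1) * n.choose (n / 2) ≤
      (Finset.univ.filter
        (fun x : Fin n → Bool => 2 * hammingWeight x ≤ n - t)).card := by
  refine ⟨fun a ha b hb => ?_, ?_⟩
  · rw [mem_filter] at ha hb
    exact le_card_eq_of_two_mul_hammingWeight_le hnt ha.2 hb.2
  · have half := two_pow_pred_le_card_two_mul_hammingWeight_le n
    have band := card_two_mul_hammingWeight_le_le_add n t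
    omega

/-- Let `n, t` be positive integers with `t ≤ n`, and let
`F := {x ∈ {0,1}^n : hammingWeight x ≤ (n − t)/2}`. Then (1) `F` is a
(pairwise) `t`-agreeing family, and (2) `|F| ≥ 2^(n−1) − (t+1)·C(n, ⌊n/2⌋)`. -/
theorem lowWeight_tAgreeing (n t : ℕ) (hn : 0 < n) (ht : 0 < t) (hnt : t ≤ n) :
    (∀ a ∈ Finset.univ.filter
        (fun x : Fin n → Bool => 2 * hammingWeight x ≤ n - t),
      ∀ b ∈ (Finset.univ.filter
        (fun x : Fin n → Bool => 2 * hammingWeight x ≤ n - t)),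
      t ≤ (Finset.univ.filter (fun i : Fin n => a i = b i)).card) ∧
    2 ^ (n - 1) - (t + 1) * n.choose (n / 2) ≤
      (Finset.univ.filter
        (fun x : Fin n → Bool => 2 * hammingWeight x ≤ n - t)).card :=
  lowWeight_tAgreeing_general n t hnt
end

section
/- Let F ⊆ {0,1}^n and i ∈ [n]. Define the i-th shift of F as S_i(F) := {x ⊕ e_i : x ∈ F, x(i) = 0, x ⊕ e_i ∉ F} ∪ {x ∈ F : ¬(x(i) = 0 and x ⊕ e_i ∉ F)}, where x ⊕ e_i flips the i-th bit of x. Then (1) |S_i(F)| = |F|, and (2) if F is 3-wise t-agreeing then S_i(F) is 3-wise t-agreeing. -/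
/-- Flip the `i`-th bit of a boolean string. -/
def flipBit {n : ℕ} (x : Fin n → Bool) (i : Fin n) : Fin n → Bool :=
  Function.update x i (!(x i))

/-- The `i`-th shift of a family `F ⊆ {0,1}^n`:
`S_i(F) = {x ⊕ e_i : x ∈ F, x(i) = 0, x ⊕ e_i ∉ F} ∪
          {x ∈ F : ¬(x(i) = 0 ∧ x ⊕ e_i ∉ F)}`. -/
def shiftFamily {n : ℕ} (F : Finset (Fin n → Bool)) (i : Fin n) :
    Finset (Fin n → Bool) :=
  ((F.filter (fun x => x i = false ∧ flipBit x i ∉ F)).image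
      (fun x => flipBit x i)) ∪
    (F.filter (fun x => ¬(x i = false ∧ flipBit x i ∉ F)))

lemma flipBit_apply {n : ℕ} (x : Fin n → Bool) (i j : Fin n) :
    flipBit x i j = if j = i then !(x i) else x j :=
  Function.update_apply x i (!(x i)) j

lemma flipBit_self {n : ℕ} (x : Fin n → Bool) (i : Fin n) :
    flipBit x i i = !(x i) := by simp [flipBit_apply]

lemma flipBit_ne {n : ℕ} (x : Fin n → Bool) {i j : Fin n} (h : j ≠ i) :
    flipBit x i j = x j := by simp [flipBit_apply, h]

lemma flipBit_flipBit {n : ℕ} (x : Fin n → Bool) (i : Fin n) :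
    flipBit (flipBit x i) i = x := by
  funext j
  by_cases h : j = i
  · subst h; simp [flipBit_apply]
  · simp [flipBit_apply, h]

lemma mem_shift {n : ℕ} {F : Finset (Fin n → Bool)} {i : Fin n}
    {y : Fin n → Bool} :
    y ∈ shiftFamily F i ↔
      (y ∈ F ∧ (y i = true ∨ flipBit y i ∈ F)) ∨
      (y ∉ F ∧ y i = true ∧ flipBit y i ∈ F) := by
  unfold shiftFamily
  simp only [Finset.mem_union, Finset.mem_image, Finset.mem_filter]
  constructor
  · rintro (⟨x, ⟨hxF, hxi, hxflip⟩, rfl⟩ | ⟨hyF, hy⟩)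
    · right
      refine ⟨hxflip, ?_, ?_⟩
      · rw [flipBit_self, hxi]; rfl
      · rw [flipBit_flipBit]; exact hxF
    · left
      refine ⟨hyF, ?_⟩
      by_cases h : y i = true
      · exact Or.inl h
      · have h' : y i = false := by cases hyi : y i <;> simp_all
        right
        by_contra hc
        exact hy ⟨h', hc⟩
  · rintro (⟨hyF, h⟩ | ⟨hyF, hyi, hflip⟩)
    · right
      refine ⟨hyF, ?_⟩
      rintro ⟨h1, h2⟩
      rcases h with h | h
      · rw [h1] at h; exact Bool.false_ne_true h
      · exact h2 h
    · left
      refine ⟨flipBit y i, ⟨hflip, ?_, ?_⟩, flipBit_flipBit y i⟩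
      · rw [flipBit_self, hyi]; rfl
      · rw [flipBit_flipBit]; exact hyF

/-- Representative used when the triple agrees at `i`. -/
def rep2 {n : ℕ} (F : Finset (Fin n → Bool)) (i : Fin n)
    (y : Fin n → Bool) : Fin n → Bool :=
  if y ∈ F then y else flipBit y i

/-- Representative used when the triple disagrees at `i`. -/
def rep3 {n : ℕ} (F : Finset (Fin n → Bool)) (i : Fin n)
    (y : Fin n → Bool) : Fin n → Bool :=
  if y i = false then flipBit y i else if y ∈ F then y else flipBit y i

lemma rep2_mem {n : ℕ} {F : Finset (Fin n → Bool)} {i : Fin n}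
    {y : Fin n → Bool} (hy : y ∈ shiftFamily F i) : rep2 F i y ∈ F := by
  unfold rep2
  split
  · assumption
  · rcases mem_shift.1 hy with ⟨h, _⟩ | ⟨_, _, h⟩
    · exact absurd h ‹y ∉ F›
    · exact h

lemma rep2_off {n : ℕ} (F : Finset (Fin n → Bool)) (i : Fin n)
    (y : Fin n → Bool) {j : Fin n} (h : j ≠ i) : rep2 F i y j = y j := by
  unfold rep2; split
  · rfl
  · exact flipBit_ne y h

lemma rep3_mem {n : ℕ} {F : Finset (Fin n → Bool)} {i : Fin n}
    {y : Fin n → Bool} (hy : y ∈ shiftFamily F i) : rep3 F i y ∈ F := by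
  by_cases h0 : y i = false
  · rcases mem_shift.1 hy with ⟨hF, hor⟩ | ⟨_, hi, _⟩
    · rcases hor with h | h
      · simp_all
      · simpa [rep3, h0] using h
    · simp_all
  · by_cases hF : y ∈ F
    · simp [rep3, h0, hF]
    · rcases mem_shift.1 hy with ⟨h, _⟩ | ⟨_, _, hflip⟩
      · exact absurd h hF
      · simpa [rep3, h0, hF] using hflip

lemma rep3_off {n : ℕ} (F : Finset (Fin n → Bool)) (i : Fin n)
    (y : Fin n → Bool) {j : Fin n} (h : j ≠ i) : rep3 F i y j = y j := by
  unfold rep3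
  split
  · exact flipBit_ne y h
  · split
    · rfl
    · exact flipBit_ne y h

lemma rep3_bit_false {n : ℕ} {F : Finset (Fin n → Bool)} {i : Fin n}
    {y : Fin n → Bool} (h : rep3 F i y i = false) : y i = true := by
  by_contra hc
  have h' : y i = false := by cases hyi : y i <;> simp_all
  unfold rep3 at h
  rw [if_pos h', flipBit_self, h'] at h
  simp at h

lemma rep3_bit_of_notMem {n : ℕ} {F : Finset (Fin n → Bool)} {i : Fin n}
    {y : Fin n → Bool} (hy : y ∈ shiftFamily F i) (hF : y ∉ F) :
    rep3 F i y i = false := by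
  have hi : y i = true := by
    rcases mem_shift.1 hy with ⟨h, _⟩ | ⟨_, h, _⟩
    · exact absurd h hF
    · exact h
  unfold rep3
  rw [if_neg (by simp [hi]), if_neg hF, flipBit_self, hi]
  rfl

lemma agr_le {n : ℕ} (a b c a' b' c' : Fin n → Bool) (i : Fin n)
    (ha : ∀ j, j ≠ i → a j = a' j) (hb : ∀ j, j ≠ i → b j = b' j)
    (hc : ∀ j, j ≠ i → c j = c' j)
    (hi : (a i = b i ∧ b i = c i) → (a' i = b' i ∧ b' i = c' i)) :
    (Finset.univ.filter (fun j : Fin n => a j = b j ∧ b j = c j)).card ≤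
      (Finset.univ.filter
        (fun j : Fin n => a' j = b' j ∧ b' j = c' j)).card := by
  apply Finset.card_le_card
  intro j hj
  simp only [Finset.mem_filter, Finset.mem_univ, true_and] at hj ⊢
  by_cases h : j = i
  · subst h; exact hi hj
  · rw [← ha j h, ← hb j h, ← hc j h]; exact hj

/-- Shifting preserves the size of a family and preserves the property of
being 3-wise `t`-agreeing. -/
theorem shift_preserves (n t : ℕ) (F : Finset (Fin n → Bool)) (i : Fin n) :
    (shiftFamily F i).card = F.card ∧
    ((∀ a ∈ F, ∀ b ∈ F, ∀ c ∈ F,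
        t ≤ (Finset.univ.filter
          (fun j : Fin n => a j = b j ∧ b j = c j)).card) →
      (∀ a ∈ shiftFamily F i, ∀ b ∈ shiftFamily F i, ∀ c ∈ shiftFamily F i,
        t ≤ (Finset.univ.filter
          (fun j : Fin n => a j = b j ∧ b j = c j)).card)) := by
  constructor
  · -- cardinality
    unfold shiftFamily
    rw [Finset.card_union_of_disjoint, Finset.card_image_of_injOn]
    · exact Finset.card_filter_add_card_filter_not _
    · intro x _ y _ hxy
      have := congrArg (fun z => flipBit z i) hxy
      simpa [flipBit_flipBit] using this
    · rw [Finset.disjoint_left]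
      rintro z hz hz2
      simp only [Finset.mem_image, Finset.mem_filter] at hz hz2
      obtain ⟨x, ⟨_, _, hx3⟩, rfl⟩ := hz
      exact hx3 hz2.1
  · intro hF a ha b hb c hc
    by_cases hmem : a ∈ F ∧ b ∈ F ∧ c ∈ F
    · exact hF a hmem.1 b hmem.2.1 c hmem.2.2
    by_cases hagr : a i = b i ∧ b i = c i
    · -- use rep2
      refine le_trans
        (hF _ (rep2_mem ha) _ (rep2_mem hb) _ (rep2_mem hc)) ?_
      exact agr_le _ _ _ a b c i
        (fun j hj => rep2_off F i a hj)
        (fun j hj => rep2_off F i b hj)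
        (fun j hj => rep2_off F i c hj)
        (fun _ => hagr)
    · -- use rep3
      refine le_trans
        (hF _ (rep3_mem ha) _ (rep3_mem hb) _ (rep3_mem hc)) ?_
      refine agr_le _ _ _ a b c i
        (fun j hj => rep3_off F i a hj)
        (fun j hj => rep3_off F i b hj)
        (fun j hj => rep3_off F i c hj) ?_
      intro h
      exfalso
      -- some element of the triple is not in F
      have hzero : rep3 F i a i = false := by
        push_neg at hmem
        by_cases haF : a ∈ F
        · by_cases hbF : b ∈ F
          · have hcF : c ∉ F := hmem haF hbF
            rw [h.1, h.2]
            exact rep3_bit_of_notMem hc hcF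
          · rw [h.1]
            exact rep3_bit_of_notMem hb hbF
        · exact rep3_bit_of_notMem ha haF
      have hb0 : rep3 F i b i = false := by rw [← h.1]; exact hzero
      have hc0 : rep3 F i c i = false := by rw [← h.2, ← h.1]; exact hzero
      exact hagr ⟨(rep3_bit_false hzero).trans (rep3_bit_false hb0).symm,
        (rep3_bit_false hb0).trans (rep3_bit_false hc0).symm⟩
end

section
/- Let F ⊆ {0,1}^n be up-closed (i.e., if x ∈ F and x ≤ y coordinatewise then y ∈ F) and 3-wise t-agreeing. Then F is 3-wise t-intersecting: for all (not necessarily distinct) a, b, c ∈ F, |{i ∈ [n] : a(i) = b(i) = c(i) = 1}| ≥ t. -/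
/-!
Given `a b c ∈ F`, raise `c` to `c ⊔ (a ⊓ b)ᶜ`: it stays in `F` by up-closure, and it is `1`
wherever `a` or `b` is `0`, so `a`, `b` and the raised string can agree only at coordinates where
`a`, `b` and `c` are all `1`.
-/

open Finset

variable {ι : Type*} [Fintype ι]

def agr (a b c : ι → Bool) : Finset ι :=
  univ.filter fun i => a i = b i ∧ b i = c i

theorem agr_sup_compl_inf_subset (a b c : ι → Bool) :
    agr a b (c ⊔ (a ⊓ b)ᶜ) ⊆ univ.filter fun i => a i = true ∧ b i = true ∧ c i = true := by
  intro i
  simp only [agr, mem_filter, mem_univ, true_and, Pi.sup_apply, Pi.compl_apply, Pi.inf_apply]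
  cases a i <;> cases b i <;> cases c i <;> decide

/-- An up-closed 3-wise `t`-agreeing family `F ⊆ {0,1}^n` is 3-wise
`t`-intersecting. -/
theorem upClosed_tAgreeing_is_tIntersecting (n t : ℕ)
    (F : Finset (Fin n → Bool))
    (hup : ∀ x ∈ F, ∀ y : Fin n → Bool, (∀ j, x j ≤ y j) → y ∈ F)
    (hagr : ∀ a ∈ F, ∀ b ∈ F, ∀ c ∈ F,
      t ≤ (Finset.univ.filter
        (fun i : Fin n => a i = b i ∧ b i = c i)).card) :
    ∀ a ∈ F, ∀ b ∈ F, ∀ c ∈ F,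
      t ≤ (Finset.univ.filter
        (fun i : Fin n => a i = true ∧ b i = true ∧ c i = true)).card := by
  intro a ha b hb c hc
  have hraised : c ⊔ (a ⊓ b)ᶜ ∈ F := hup c hc _ (le_sup_left : c ≤ c ⊔ (a ⊓ b)ᶜ)
  exact (hagr a ha b hb _ hraised).trans (card_le_card (agr_sup_compl_inf_subset a b c))
end

section
/- Let n, N, t, d be positive integers with t ≥ 1 and d ≥ 2, and let S : Fin N → Finset (Fin n) be an indexed family of subsets of [n] (repetitions allowed) with |S_j| ≤ t for every j. Suppose that for every choice function g : Fin d → Fin N there exist distinct indices i, i' ∈ [d] with S_{g(i)} ∩ S_{g(i')} ≠ ∅. Then there exists an element x ∈ [n] such that t · (d − 1) · |{j ∈ [N] : x ∈ S_j}| ≥ N. -/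
/-!
Take a maximal pairwise disjoint subfamily `A`. By hypothesis it has fewer than `d` members, so
its union `U` has at most `t (d - 1)` elements, and by maximality every member of the family meets
`U`. Counting incidences between `U` and the family, the most popular element of `U` lies in at
least `N / |U|` members.
-/

open Finset

variable {ι α : Type*}

lemma Finset.card_lt_of_pairwiseDisjoint [DecidableEq α] {d : ℕ} {S : ι → Finset α} {A : Finset ι}
    (hA : (A : Set ι).PairwiseDisjoint S)
    (hint : ∀ g : Fin d → ι, ∃ i i' : Fin d, i ≠ i' ∧ (S (g i) ∩ S (g i')).Nonempty) :
    #A < d := by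
  by_contra! hdA
  let e : Fin d ↪ A := (Fin.castLEEmb (by simpa using hdA)).trans A.equivFin.symm.toEmbedding
  obtain ⟨i, i', hne, hmeet⟩ := hint fun i => e i
  refine Finset.not_nonempty_iff_eq_empty.2 ?_ hmeet
  exact Finset.disjoint_iff_inter_eq_empty.1 <|
    hA (e i).2 (e i').2 fun h => hne (e.injective (Subtype.ext h))

lemma exists_pairwiseDisjoint_inter_biUnion_nonempty [Fintype ι] [DecidableEq α]
    (S : ι → Finset α) :
    ∃ A : Finset ι, (A : Set ι).PairwiseDisjoint S ∧
      ∀ j, (S j).Nonempty → (S j ∩ A.biUnion S).Nonempty := by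
  classical
  obtain ⟨A, hA, hAmax⟩ := (univ.filter fun A : Finset ι => (A : Set ι).PairwiseDisjoint S)
    |>.exists_max_image card ⟨∅, by simp⟩
  simp only [mem_filter, mem_univ, true_and] at hA hAmax
  refine ⟨A, hA, fun j hj => ?_⟩
  by_contra hdisj
  rw [← not_disjoint_iff_nonempty_inter, not_not] at hdisj
  have hjA : j ∉ A := fun hjA =>
    hj.ne_empty (disjoint_self.1 (hdisj.mono_right (subset_biUnion_of_mem S hjA)))
  have hinsert : ((insert j A : Finset ι) : Set ι).PairwiseDisjoint S := by
    rw [coe_insert]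
    exact hA.insert fun a ha _ => (disjoint_biUnion_right _ _ _).1 hdisj a ha
  have := hAmax _ hinsert
  rw [card_insert_of_notMem hjA] at this
  omega

lemma exists_card_le_card_mul_card_filter_mem [Fintype ι] [Nonempty ι] [DecidableEq α]
    (S : ι → Finset α) (U : Finset α) (hmeet : ∀ j, (S j ∩ U).Nonempty) :
    ∃ x, Fintype.card ι ≤ #U * #{j | x ∈ S j} := by
  choose f hf using hmeet
  have hfU : ∀ j, f j ∈ U := fun j => (mem_inter.1 (hf j)).2
  obtain ⟨x, -, hx⟩ := U.exists_max_image (fun y => #{j | y ∈ S j})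
    ⟨f (Classical.arbitrary ι), hfU _⟩
  refine ⟨x, ?_⟩
  calc Fintype.card ι = ∑ y ∈ U, #{j | f j = y} :=
        card_eq_sum_card_fiberwise fun j _ => hfU j
    _ ≤ ∑ y ∈ U, #{j | y ∈ S j} := sum_le_sum fun y _ =>
        card_le_card fun j => by
          simp only [mem_filter, mem_univ, true_and]
          rintro rfl
          exact (mem_inter.1 (hf j)).1
    _ ≤ #U * #{j | x ∈ S j} := sum_le_card_nsmul _ _ _ hx

theorem covering_lemma_general (n N t d : ℕ) (hN : 0 < N)
    (S : Fin N → Finset (Fin n))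
    (hsize : ∀ j, (S j).card ≤ t)
    (hint : ∀ g : Fin d → Fin N, ∃ i i' : Fin d, i ≠ i' ∧
      (S (g i) ∩ S (g i')).Nonempty) :
    ∃ x : Fin n,
      N ≤ t * (d - 1) * (Finset.univ.filter (fun j : Fin N => x ∈ S j)).card := by
  have : Nonempty (Fin N) := Fin.pos_iff_nonempty.1 hN
  have hne : ∀ j, (S j).Nonempty := fun j => by
    obtain ⟨-, -, -, hjj⟩ := hint fun _ => j
    simpa using hjj
  obtain ⟨A, hA, hmeet⟩ := exists_pairwiseDisjoint_inter_biUnion_nonempty S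
  have hU : #(A.biUnion S) ≤ t * (d - 1) := calc
    #(A.biUnion S) ≤ #A * t := card_biUnion_le_card_mul _ _ _ fun j _ => hsize j
    _ ≤ t * (d - 1) := by
      rw [mul_comm]
      have hAd := A.card_lt_of_pairwiseDisjoint hA hint
      gcongr
      omega
  obtain ⟨x, hx⟩ := exists_card_le_card_mul_card_filter_mem S _ fun j => hmeet j (hne j)
  exact ⟨x, (Fintype.card_fin N ▸ hx).trans (Nat.mul_le_mul_right _ hU)⟩

/-- **Covering lemma (Lemma 3.7).** Let `S : Fin N → Finset (Fin n)` be a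
multiset of subsets of `[n]`, each of size at most `t`. If among any `d`
members (chosen with repetition) some two, at distinct positions, intersect,
then some element `x ∈ [n]` lies in at least a `1/(t(d−1))` fraction of the
members. -/
theorem covering_lemma (n N t d : ℕ) (hn : 0 < n) (hN : 0 < N)
    (ht : 1 ≤ t) (hd : 2 ≤ d)
    (S : Fin N → Finset (Fin n))
    (hsize : ∀ j, (S j).card ≤ t)
    (hint : ∀ g : Fin d → Fin N, ∃ i i' : Fin d, i ≠ i' ∧
      (S (g i) ∩ S (g i')).Nonempty) :
    ∃ x : Fin n,
      N ≤ t * (d - 1) * (Finset.univ.filter (fun j : Fin N => x ∈ S j)).card :=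
  covering_lemma_general n N t d hN S hsize hint
end

section
/- Let q ≥ 2, t ≥ 1, R ≥ 1 and s ≥ 0 be integers. Let S₁, …, S_s be pairwise disjoint subsets of [R] with |S_i| ≤ t for each i, and let c₁, …, c_s : [R] → [q] be arbitrary strings. Let I ⊆ [q]^R be a set of strings such that for every b ∈ I and every i ∈ [s] there exists r ∈ S_i with b(r) = c_i(r). Then |I| ≤ (1 − ((q − 1)/q)^t)^s · q^R (an inequality of real numbers). -/
/-! Because the blocks `S i` are disjoint, the events "`b` agrees with `c i` somewhere on `S i`"
depend on disjoint sets of coordinates, hence are independent for a uniformly random string;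
the `i`-th one misses with probability `((q - 1) / q) ^ #(S i) ≥ ((q - 1) / q) ^ t`.
Independence is a count: if `P` ignores the coordinates in `T` and `Q` only reads them, swapping
the `T`-coordinates of two strings is an involution carrying `{P ∧ Q} × [q]^R` onto
`{P} × {Q}`. -/

open Finset Fintype Function

theorem dependsOn_exists_eq {ι α : Type*} (T : Finset ι) (c : ι → α) :
    DependsOn (fun b : ι → α ↦ ∃ r ∈ T, b r = c r) T :=
  fun x y h ↦ propext <| exists_congr fun r ↦ and_congr_right fun hr ↦ by rw [h r hr]

variable {ι α : Type*} [Fintype ι] [DecidableEq ι] [Fintype α]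

theorem card_filter_and_mul_eq_of_dependsOn (T : Finset ι) {P Q : (ι → α) → Prop}
    [DecidablePred P] [DecidablePred Q] (hP : DependsOn P (T : Set ι)ᶜ) (hQ : DependsOn Q T) :
    #{b | P b ∧ Q b} * card α ^ card ι = #{b | P b} * #{b | Q b} := by
  have hP' (x y : ι → α) : P (T.piecewise y x) = P x :=
    hP fun _ hr ↦ T.piecewise_eq_of_notMem _ _ hr
  have hQ' (x y : ι → α) : Q (T.piecewise x y) = Q x :=
    hQ fun _ hr ↦ T.piecewise_eq_of_mem _ _ hr
  have hswap (x y : ι → α) : T.piecewise (T.piecewise x y) (T.piecewise y x) = x := by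
    ext r; by_cases hr : r ∈ T <;> simp [hr]
  rw [← card_fun, ← card_univ, ← card_product, ← card_product]
  refine card_nbij' (fun p ↦ (T.piecewise p.2 p.1, T.piecewise p.1 p.2))
    (fun p ↦ (T.piecewise p.2 p.1, T.piecewise p.1 p.2)) ?_ ?_ ?_ ?_
  · rintro ⟨x, y⟩ h
    simpa [hP', hQ'] using h
  · rintro ⟨x, y⟩ h
    simpa [hP', hQ'] using h
  all_goals rintro ⟨x, y⟩ -; simp [hswap]

theorem card_filter_forall_ne [DecidableEq α] (T : Finset ι) (c : ι → α) :
    #{b : ι → α | ∀ r ∈ T, b r ≠ c r} = (card α - 1) ^ #T * card α ^ #Tᶜ := by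
  have hpi : ({b | ∀ r ∈ T, b r ≠ c r} : Finset (ι → α))
      = piFinset fun r ↦ if r ∈ T then {c r}ᶜ else univ := by
    ext b
    simp only [mem_filter, mem_univ, true_and, mem_piFinset]
    refine ⟨fun h r ↦ ?_, fun h r hr ↦ by simpa [hr] using h r⟩
    by_cases hr : r ∈ T <;> simp [hr, h]
  simp only [hpi, card_piFinset, apply_ite card, card_univ]
  rw [prod_ite, filter_mem_eq_inter, univ_inter, filter_notMem_eq_sdiff, ← compl_eq_univ_sdiff]
  simp [card_compl]

theorem card_filter_exists_eq_le [DecidableEq α] [Nonempty α] (T : Finset ι) (c : ι → α) {t : ℕ}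
    (hT : #T ≤ t) :
    (#{b : ι → α | ∃ r ∈ T, b r = c r} : ℝ)
      ≤ (1 - ((card α - 1) / card α : ℝ) ^ t) * card α ^ card ι := by
  set q : ℝ := card α with hq_def
  have hq : 1 ≤ q := Nat.one_le_cast.mpr card_pos
  have hρ : 0 ≤ (q - 1) / q := div_nonneg (by linarith) (by linarith)
  have hρ' : (q - 1) / q ≤ 1 := div_le_one_of_le₀ (by linarith) (by linarith)
  have hsplit := card_filter_add_card_filter_not (s := (univ : Finset (ι → α)))
    (p := fun b ↦ ∃ r ∈ T, b r = c r)
  simp only [not_exists, not_and, ← ne_eq, card_filter_forall_ne, card_univ, card_fun] at hsplit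
  have hmiss : ((card α - 1) ^ #T * card α ^ #Tᶜ : ℕ) = ((q - 1) / q) ^ #T * q ^ card ι := by
    rw [← card_add_card_compl T, pow_add, div_pow]
    push_cast [Nat.cast_sub card_pos, ← hq_def]
    field_simp
  have hbound : ((q - 1) / q) ^ t ≤ ((q - 1) / q) ^ #T := pow_le_pow_of_le_one hρ hρ' hT
  have hqR : 0 ≤ q ^ card ι := by positivity
  rw [← Nat.cast_inj (R := ℝ), Nat.cast_add, hmiss, Nat.cast_pow] at hsplit
  linarith [mul_le_mul_of_nonneg_right hbound hqR]

theorem card_filter_forall_exists_eq_le [DecidableEq α] [Nonempty α] {κ : Type*} [DecidableEq κ]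
    (S : κ → Finset ι) (c : κ → ι → α) {t : ℕ} (hS : ∀ i, #(S i) ≤ t) (J : Finset κ)
    (hJ : (J : Set κ).PairwiseDisjoint S) :
    (#{b : ι → α | ∀ i ∈ J, ∃ r ∈ S i, b r = c i r} : ℝ)
      ≤ (1 - ((card α - 1) / card α : ℝ) ^ t) ^ #J * card α ^ card ι := by
  induction J using Finset.induction_on with
  | empty => simp
  | insert j J hj ih =>
    have hJ' : (J : Set κ).PairwiseDisjoint S := hJ.subset (by simp)
    have hP : DependsOn (fun b : ι → α ↦ ∀ i ∈ J, ∃ r ∈ S i, b r = c i r) (S j : Set ι)ᶜ := by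
      intro x y h
      refine propext <| forall₂_congr fun i hi ↦ Eq.to_iff <|
        (dependsOn_exists_eq (S i) (c i)).mono ?_ h
      refine Set.subset_compl_iff_disjoint_right.mpr (disjoint_coe.mpr ?_)
      exact hJ (mem_insert_of_mem hi) (mem_insert_self j J) (ne_of_mem_of_not_mem hi hj)
    have hfilter : #{b : ι → α | ∀ i ∈ insert j J, ∃ r ∈ S i, b r = c i r}
        = #{b : ι → α | (∀ i ∈ J, ∃ r ∈ S i, b r = c i r) ∧ ∃ r ∈ S j, b r = c j r} := by
      simp only [forall_mem_insert, and_comm]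
    have hindep := card_filter_and_mul_eq_of_dependsOn (S j) hP (dependsOn_exists_eq (S j) (c j))
    have hlast := card_filter_exists_eq_le (S j) (c j) (hS j)
    rw [hfilter, card_insert_of_notMem hj, pow_succ]
    refine le_of_mul_le_mul_right ?_ (by positivity : (0 : ℝ) < card α ^ card ι)
    calc _ = (#{b : ι → α | ∀ i ∈ J, ∃ r ∈ S i, b r = c i r} : ℝ)
          * #{b : ι → α | ∃ r ∈ S j, b r = c j r} := by exact_mod_cast hindep
      _ ≤ _ := mul_le_mul (ih hJ') hlast (by positivity) ((Nat.cast_nonneg _).trans (ih hJ'))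
      _ = _ := by ring

theorem disjointBlocks_counting_general (q t R s : ℕ) (hq : 2 ≤ q)
    (S : Fin s → Finset (Fin R))
    (hdisj : ∀ i j : Fin s, i ≠ j → Disjoint (S i) (S j))
    (hsize : ∀ i, (S i).card ≤ t)
    (c : Fin s → Fin R → Fin q)
    (I : Finset (Fin R → Fin q))
    (hI : ∀ b ∈ I, ∀ i : Fin s, ∃ r ∈ S i, b r = c i r) :
    (I.card : ℝ) ≤ (1 - (((q : ℝ) - 1) / q) ^ t) ^ s * (q : ℝ) ^ R := by
  have : NeZero q := ⟨by omega⟩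
  calc (#I : ℝ) ≤ #{b : Fin R → Fin q | ∀ i ∈ univ, ∃ r ∈ S i, b r = c i r} := by
        exact_mod_cast card_le_card fun b hb ↦ by simpa using hI b hb
    _ ≤ _ := by
      simpa using card_filter_forall_exists_eq_le S c hsize univ fun i _ j _ ↦ hdisj i j

/-- **Counting estimate (heart of Claim 5.3).** Let `S₁,…,S_s` be pairwise
disjoint subsets of `[R]`, each of size at most `t`, and `c₁,…,c_s` arbitrary
strings. If every `b ∈ I ⊆ [q]^R` agrees with `c_i` somewhere on `S_i` for
each `i`, then `|I| ≤ (1 − ((q−1)/q)^t)^s · q^R`. -/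
theorem disjointBlocks_counting (q t R s : ℕ) (hq : 2 ≤ q) (ht : 1 ≤ t)
    (hR : 1 ≤ R)
    (S : Fin s → Finset (Fin R))
    (hdisj : ∀ i j : Fin s, i ≠ j → Disjoint (S i) (S j))
    (hsize : ∀ i, (S i).card ≤ t)
    (c : Fin s → Fin R → Fin q)
    (I : Finset (Fin R → Fin q))
    (hI : ∀ b ∈ I, ∀ i : Fin s, ∃ r ∈ S i, b r = c i r) :
    (I.card : ℝ) ≤ (1 - (((q : ℝ) - 1) / q) ^ t) ^ s * (q : ℝ) ^ R :=
  disjointBlocks_counting_general q t R s hq S hdisj hsize c I hI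
end

section
/- Let U, V be finite sets, E ⊆ U × V a set of edges, and φ_{x,y} : [L] → [R] a map for each (x, y) ∈ E. Let t ≥ 1, let X ⊆ U, and for each x ∈ X let L_x ⊆ [L] be a nonempty set with |L_x| ≤ t. Suppose that for every y ∈ V and all x₁, x₂ ∈ X with (x₁, y) ∈ E and (x₂, y) ∈ E, we have φ_{x₁,y}(L_{x₁}) ∩ φ_{x₂,y}(L_{x₂}) ≠ ∅. Then there exist assignments A_U : U → [L] and A_V : V → [R] such that t² · |{(x, y) ∈ E : x ∈ X and φ_{x,y}(A_U(x)) = A_V(y)}| ≥ |{(x, y) ∈ E : x ∈ X}|. -/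
/-!
Fix for every right vertex `y` with a neighbour in `X` one such neighbour `x_y`, and let
`T y = φ_{x_y,y}(L_{x_y})`. By the intersection hypothesis every edge `(x, y)` touching `X` has a
witness label `w ∈ L_x` with `φ_{x,y}(w) ∈ T y`. Now label each `x` by its most frequent witness
label: this keeps a `1/t` fraction of the edges. Among the kept edges, label each `y` by the most
frequent projected value in `T y`: this keeps a `1/t` fraction again, and every surviving edge is
satisfied.
-/

open Finset

theorem Finset.exists_card_le_mul_card_fiber {α β : Type*} [DecidableEq β] {s : Finset α}
    {T : Finset β} {f : α → β} {t : ℕ} (hf : ∀ a ∈ s, f a ∈ T) (hT : T.Nonempty)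
    (hcard : #T ≤ t) : ∃ b ∈ T, #s ≤ t * #{a ∈ s | f a = b} := by
  have hT0 : (0 : ℚ) < #T := by exact_mod_cast hT.card_pos
  obtain ⟨b, hb, hfiber⟩ := exists_le_card_fiber_of_nsmul_le_card_of_maps_to
    (b := (#s : ℚ) / #T) hf hT (by rw [nsmul_eq_mul, mul_div_cancel₀ _ hT0.ne'])
  refine ⟨b, hb, ?_⟩
  rw [div_le_iff₀ hT0] at hfiber
  calc #s ≤ #{a ∈ s | f a = b} * #T := by exact_mod_cast hfiber
    _ ≤ t * #{a ∈ s | f a = b} := by rw [mul_comm]; gcongr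

theorem exists_card_le_mul_card_filter_eq_comp {ι κ γ : Type*} [DecidableEq γ] [Nonempty γ]
    (s : Finset ι) (k : ι → κ) (f : ι → γ) (S : κ → Finset γ) {t : ℕ}
    (hf : ∀ i ∈ s, f i ∈ S (k i)) (hS : ∀ i ∈ s, #(S (k i)) ≤ t) :
    ∃ A : κ → γ, #s ≤ t * #{i ∈ s | f i = A (k i)} := by
  classical
  have hfiber : ∀ c, ∃ a, #{i ∈ s | k i = c} ≤ t * #{i ∈ s | k i = c ∧ f i = a} := by
    intro c
    rcases (s.filter (k · = c)).eq_empty_or_nonempty with hempty | ⟨i, hi⟩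
    · exact ⟨Classical.arbitrary γ, by simp [hempty]⟩
    · rw [mem_filter] at hi
      obtain ⟨a, -, ha⟩ := exists_card_le_mul_card_fiber (s := s.filter (k · = c)) (f := f)
        (fun j hj => (mem_filter.1 hj).2 ▸ hf j (mem_filter.1 hj).1) ⟨f i, hi.2 ▸ hf i hi.1⟩
        (hi.2 ▸ hS i hi.1)
      exact ⟨a, by simpa only [filter_filter] using ha⟩
  choose A hA using hfiber
  refine ⟨A, ?_⟩
  calc #s = ∑ c ∈ s.image k, #{i ∈ s | k i = c} :=
        card_eq_sum_card_fiberwise fun i hi => mem_image_of_mem k hi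
    _ ≤ ∑ c ∈ s.image k, t * #{i ∈ s | k i = c ∧ f i = A c} := sum_le_sum fun c _ => hA c
    _ = t * #{i ∈ s | f i = A (k i)} := by
        rw [← mul_sum, card_eq_sum_card_fiberwise (f := k) (t := s.image k)
          fun i hi => mem_image_of_mem k (mem_filter.1 hi).1]
        simp only [filter_filter]
        refine congr_arg (t * ·) (sum_congr rfl fun c _ => congr_arg card (filter_congr ?_))
        grind

theorem exists_labeling_of_witness {U V α β : Type*} [DecidableEq β] [Nonempty α] [Nonempty β]
    (s : Finset (U × V)) (φ : U → V → α → β) (Lx : U → Finset α) (T : V → Finset β)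
    (w : U × V → α) {t : ℕ} (hw : ∀ p ∈ s, w p ∈ Lx p.1 ∧ φ p.1 p.2 (w p) ∈ T p.2)
    (hLx : ∀ p ∈ s, #(Lx p.1) ≤ t) (hT : ∀ p ∈ s, #(T p.2) ≤ t) :
    ∃ (A_U : U → α) (A_V : V → β), #s ≤ t ^ 2 * #{p ∈ s | φ p.1 p.2 (A_U p.1) = A_V p.2} := by
  classical
  obtain ⟨A_U, hU⟩ := exists_card_le_mul_card_filter_eq_comp s Prod.fst w Lx
    (fun p hp => (hw p hp).1) hLx
  obtain ⟨A_V, hV⟩ := exists_card_le_mul_card_filter_eq_comp {p ∈ s | w p = A_U p.1} Prod.snd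
    (fun p => φ p.1 p.2 (w p)) T (fun p hp => (hw p (mem_filter.1 hp).1).2)
    (fun p hp => hT p (mem_filter.1 hp).1)
  refine ⟨A_U, A_V, ?_⟩
  have hsub : {p ∈ {p ∈ s | w p = A_U p.1} | φ p.1 p.2 (w p) = A_V p.2} ⊆
      {p ∈ s | φ p.1 p.2 (A_U p.1) = A_V p.2} := by
    intro p
    simp only [mem_filter]
    rintro ⟨⟨hp, hwp⟩, hφ⟩
    exact ⟨hp, hwp ▸ hφ⟩
  calc #s ≤ t * (t * #{p ∈ {p ∈ s | w p = A_U p.1} | φ p.1 p.2 (w p) = A_V p.2}) :=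
        hU.trans (Nat.mul_le_mul_left t hV)
    _ ≤ t * (t * #{p ∈ s | φ p.1 p.2 (A_U p.1) = A_V p.2}) := by gcongr
    _ = t ^ 2 * #{p ∈ s | φ p.1 p.2 (A_U p.1) = A_V p.2} := by ring

theorem exists_projection_lists {U V α β : Type*} [DecidableEq β] (E : Finset (U × V))
    (φ : U → V → α → β) (X : Finset U) (Lx : U → Finset α) {t : ℕ}
    (hsize : ∀ x ∈ X, #(Lx x) ≤ t)
    (hint : ∀ y : V, ∀ x₁ ∈ X, ∀ x₂ ∈ X, (x₁, y) ∈ E → (x₂, y) ∈ E →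
      (((Lx x₁).image (φ x₁ y)) ∩ ((Lx x₂).image (φ x₂ y))).Nonempty) :
    ∃ T : V → Finset β, (∀ y, #(T y) ≤ t) ∧
      ∀ p ∈ E, p.1 ∈ X → ∃ a ∈ Lx p.1, φ p.1 p.2 a ∈ T p.2 := by
  classical
  refine ⟨fun y => if h : ∃ x ∈ X, (x, y) ∈ E then (Lx h.choose).image (φ h.choose y) else ∅,
    fun y => ?_, fun p hp hpX => ?_⟩
  · dsimp only
    split_ifs with h
    exacts [card_image_le.trans (hsize _ h.choose_spec.1), by simp]
  · have h : ∃ x ∈ X, (x, p.2) ∈ E := ⟨p.1, hpX, hp⟩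
    obtain ⟨r, hr⟩ := hint p.2 p.1 hpX _ h.choose_spec.1 hp h.choose_spec.2
    obtain ⟨⟨a, ha, rfl⟩, hr⟩ := (mem_inter.1 hr).imp_left mem_image.1
    exact ⟨a, ha, by simpa only [dif_pos h] using hr⟩

theorem listDecoding_labeling_general {U V : Type*}
    [DecidableEq U]
    (L R t : ℕ) (hL : 0 < L) (hR : 0 < R)
    (E : Finset (U × V)) (φ : U → V → Fin L → Fin R)
    (X : Finset U) (Lx : U → Finset (Fin L))
    (hsize : ∀ x ∈ X, (Lx x).card ≤ t)
    (hint : ∀ y : V, ∀ x₁ ∈ X, ∀ x₂ ∈ X, (x₁, y) ∈ E → (x₂, y) ∈ E →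
      (((Lx x₁).image (φ x₁ y)) ∩ ((Lx x₂).image (φ x₂ y))).Nonempty) :
    ∃ (A_U : U → Fin L) (A_V : V → Fin R),
      (E.filter (fun p => p.1 ∈ X)).card ≤
        t ^ 2 * (E.filter (fun p =>
          p.1 ∈ X ∧ φ p.1 p.2 (A_U p.1) = A_V p.2)).card := by
  have : NeZero L := ⟨hL.ne'⟩
  have : NeZero R := ⟨hR.ne'⟩
  obtain ⟨T, hT, hET⟩ := exists_projection_lists E φ X Lx hsize hint
  choose! w hw using fun p (hp : p ∈ E.filter (·.1 ∈ X)) =>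
    hET p (mem_filter.1 hp).1 (mem_filter.1 hp).2
  obtain ⟨A_U, A_V, h⟩ := exists_labeling_of_witness _ φ Lx T w hw
    (fun p hp => hsize p.1 (mem_filter.1 hp).2) (fun p _ => hT p.2)
  exact ⟨A_U, A_V, by simpa only [filter_filter] using h⟩

/-- **List-decoding to labeling (soundness of Lemma 4.3).** Given nonempty
candidate label lists `L_x` of size at most `t` for each `x ∈ X` whose
projections pairwise intersect at every common neighbor `y`, there is an
assignment satisfying at least a `1/t²` fraction of the constraints touching
`X`. -/
theorem listDecoding_labeling {U V : Type*} [Fintype U] [Fintype V]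
    [DecidableEq U] [DecidableEq V]
    (L R t : ℕ) (hL : 0 < L) (hR : 0 < R) (ht : 1 ≤ t)
    (E : Finset (U × V)) (φ : U → V → Fin L → Fin R)
    (X : Finset U) (Lx : U → Finset (Fin L))
    (hne : ∀ x ∈ X, (Lx x).Nonempty)
    (hsize : ∀ x ∈ X, (Lx x).card ≤ t)
    (hint : ∀ y : V, ∀ x₁ ∈ X, ∀ x₂ ∈ X, (x₁, y) ∈ E → (x₂, y) ∈ E →
      (((Lx x₁).image (φ x₁ y)) ∩ ((Lx x₂).image (φ x₂ y))).Nonempty) :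
    ∃ (A_U : U → Fin L) (A_V : V → Fin R),
      (E.filter (fun p => p.1 ∈ X)).card ≤
        t ^ 2 * (E.filter (fun p =>
          p.1 ∈ X ∧ φ p.1 p.2 (A_U p.1) = A_V p.2)).card :=
  listDecoding_labeling_general L R t hL hR E φ X Lx hsize hint
end

section
/- Let U, V be finite sets, E ⊆ U × V a set of edges, and φ_{x,y} : [L] → [R] a map for each (x, y) ∈ E. Let t ≥ 1 and d ≥ 2, let X ⊆ U, and for each x ∈ X let L_x ⊆ [L] be a nonempty set with |L_x| ≤ t. Suppose that for every y ∈ V and every choice (with repetition allowed) of x₁, …, x_d ∈ X all adjacent to y (i.e., (x_i, y) ∈ E for each i), there exist distinct indices i, i' ∈ [d] with φ_{x_i,y}(L_{x_i}) ∩ φ_{x_{i'},y}(L_{x_{i'}}) ≠ ∅. Then there exist assignments A_U : U → [L] and A_V : V → [R] such that t² · (d − 1) · |{(x, y) ∈ E : x ∈ X and φ_{x,y}(A_U(x)) = A_V(y)}| ≥ |{(x, y) ∈ E : x ∈ X}|. -/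
/-!
At a vertex `y`, a maximal pairwise disjoint subfamily of the projected lists `φ_{x,y}(L_x)`
of the neighbours `x ∈ X` has fewer than `d` members, and by maximality every projected list
meets the union of its at most `t (d - 1)` labels. Hence the most popular label `A_V y` lies in a
`1 / (t (d - 1))` fraction of the projected lists. With `A_V` fixed, each `x` takes the label of
`L_x` satisfying the most of those of its edges whose projected list contains `A_V y`; the best of
the at most `t` candidates does at least as well as the average, losing a factor `t`.
-/

open Finset

namespace Finset

variable {α β ι : Type*}

theorem card_le_mul_card_of_card_fiber_le [DecidableEq β] {s s' : Finset α} (f : α → β) {c : ℕ}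
    (h : ∀ b, #{a ∈ s | f a = b} ≤ c * #{a ∈ s' | f a = b}) : #s ≤ c * #s' :=
  calc #s = ∑ b ∈ s.image f, #{a ∈ s | f a = b} := card_eq_sum_card_image f s
    _ ≤ ∑ b ∈ s.image f, c * #{a ∈ s' | f a = b} := sum_le_sum fun b _ => h b
    _ = c * #{a ∈ s' | f a ∈ s.image f} := by rw [← mul_sum, sum_card_fiberwise_eq_card_filter]
    _ ≤ c * #s' := Nat.mul_le_mul_left c (card_filter_le _ _)

theorem exists_card_filter_exists_le_card_mul [Nonempty ι] (G : Finset α) (A : Finset ι)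
    (P : ι → α → Prop) [∀ a, DecidablePred (P a)] :
    ∃ a, #{x ∈ G | ∃ a ∈ A, P a x} ≤ #A * #{x ∈ G | P a x} := by
  classical
  rcases A.eq_empty_or_nonempty with rfl | hA
  · simp
  obtain ⟨a, -, ha⟩ := A.exists_max_image (fun a => #{x ∈ G | P a x}) hA
  refine ⟨a, (card_le_card fun x hx => ?_).trans (card_biUnion_le_card_mul A _ _ ha)⟩
  obtain ⟨hxG, b, hb, hPx⟩ := mem_filter.1 hx
  exact mem_biUnion.2 ⟨b, hb, mem_filter.2 ⟨hxG, hPx⟩⟩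

theorem exists_pairwiseDisjoint_subset_forall_not_disjoint (F : Finset ι)
    {s : ι → Finset β} (hne : ∀ i ∈ F, (s i).Nonempty) :
    ∃ S ⊆ F, (S : Set ι).PairwiseDisjoint s ∧ ∀ i ∈ F, ∃ j ∈ S, ¬Disjoint (s i) (s j) := by
  classical
  set D := F.powerset.filter fun S : Finset ι => (S : Set ι).PairwiseDisjoint s
  obtain ⟨S, hS, hmax⟩ := D.exists_max_image card ⟨∅, by simp [D]⟩
  obtain ⟨hSF, hSdisj⟩ := mem_filter.1 hS
  refine ⟨S, mem_powerset.1 hSF, hSdisj, fun i hi => ?_⟩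
  by_cases hiS : i ∈ S
  · exact ⟨i, hiS, by simpa [disjoint_self_iff_empty] using (hne i hi).ne_empty⟩
  by_contra! hdisj
  have hins : insert i S ∈ D := by
    refine mem_filter.2 ⟨mem_powerset.2 (insert_subset hi (mem_powerset.1 hSF)), ?_⟩
    rw [coe_insert]
    exact hSdisj.insert_of_notMem hiS hdisj
  have := hmax _ hins
  rw [card_insert_of_notMem hiS] at this
  omega

section Covering

variable {F : Finset ι} {s : ι → Finset β} {d : ℕ}

theorem card_lt_of_pairwiseDisjoint_s16
    (hint : ∀ g : Fin d → ι, (∀ j, g j ∈ F) → ∃ j j', j ≠ j' ∧ ¬Disjoint (s (g j)) (s (g j')))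
    {S : Finset ι} (hSF : S ⊆ F)
    (hS : (S : Set ι).PairwiseDisjoint s) : #S < d := by
  by_contra! hdS
  let g : Fin d ↪ S := (Fin.castLEEmb hdS).trans S.equivFin.symm.toEmbedding
  obtain ⟨j, j', hjj', hmeet⟩ := hint (fun j => g j) fun j => hSF (g j).2
  exact hmeet (hS (g j).2 (g j').2 fun h => hjj' (g.injective (Subtype.ext h)))

theorem exists_card_le_mul_card_filter_mem [DecidableEq β] [Nonempty β] {t : ℕ}
    (hsize : ∀ i ∈ F, #(s i) ≤ t)
    (hint : ∀ g : Fin d → ι, (∀ j, g j ∈ F) → ∃ j j', j ≠ j' ∧ ¬Disjoint (s (g j)) (s (g j'))) :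
    ∃ b, #F ≤ t * (d - 1) * #{i ∈ F | b ∈ s i} := by
  -- `d` copies of `s i` must meet, so `s i` is nonempty
  have hne : ∀ i ∈ F, (s i).Nonempty := fun i hi => by
    obtain ⟨-, -, -, hmeet⟩ := hint (fun _ => i) fun _ => hi
    exact nonempty_iff_ne_empty.2 fun h => hmeet (by simp [h])
  obtain ⟨S, hSF, hS, hcover⟩ := F.exists_pairwiseDisjoint_subset_forall_not_disjoint hne
  set T := S.biUnion s
  have hT : #T ≤ t * (d - 1) :=
    calc #T ≤ #S * t := card_biUnion_le_card_mul S s t fun i hi => hsize i (hSF hi)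
      _ ≤ (d - 1) * t :=
        Nat.mul_le_mul_right t (Nat.le_sub_one_of_lt (card_lt_of_pairwiseDisjoint_s16 hint hSF hS))
      _ = t * (d - 1) := mul_comm _ _
  have hF : {i ∈ F | ∃ b ∈ T, b ∈ s i} = F := filter_true_of_mem fun i hi => by
    obtain ⟨j, hj, hmeet⟩ := hcover i hi
    obtain ⟨b, hb⟩ := not_disjoint_iff_nonempty_inter.1 hmeet
    exact ⟨b, mem_biUnion.2 ⟨j, hj, (mem_inter.1 hb).2⟩, (mem_inter.1 hb).1⟩
  obtain ⟨b, hb⟩ := F.exists_card_filter_exists_le_card_mul T fun b i => b ∈ s i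
  rw [hF] at hb
  exact ⟨b, hb.trans (Nat.mul_le_mul_right _ hT)⟩

end Covering

end Finset

section LabelCover

variable {U V α β : Type*} [DecidableEq U] {E : Finset (U × V)} {φ : U → V → α → β}
  {X : Finset U} {Lx : U → Finset α} {t : ℕ}

theorem exists_labelV_card_filter_le [DecidableEq β] [Nonempty β] {d : ℕ}
    (hsize : ∀ x ∈ X, #(Lx x) ≤ t)
    (hint : ∀ y : V, ∀ g : Fin d → U, (∀ i, g i ∈ X ∧ (g i, y) ∈ E) →
      ∃ i i' : Fin d, i ≠ i' ∧
        (((Lx (g i)).image (φ (g i) y)) ∩ ((Lx (g i')).image (φ (g i') y))).Nonempty) :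
    ∃ A_V : V → β, #{p ∈ E | p.1 ∈ X} ≤
      t * (d - 1) * #{p ∈ E | p.1 ∈ X ∧ A_V p.2 ∈ (Lx p.1).image (φ p.1 p.2)} := by
  classical
  have hcover : ∀ y, ∃ b, #{p ∈ {p ∈ E | p.1 ∈ X} | p.2 = y} ≤ t * (d - 1) *
      #{p ∈ {p ∈ {p ∈ E | p.1 ∈ X} | p.2 = y} | b ∈ (Lx p.1).image (φ p.1 p.2)} := by
    intro y
    refine exists_card_le_mul_card_filter_mem
      (fun p hp => card_image_le.trans (hsize p.1 (mem_filter.1 (mem_filter.1 hp).1).2))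
      fun g hg => ?_
    have hgy : ∀ j, g j ∈ E ∧ (g j).1 ∈ X ∧ (g j).2 = y := by simpa [and_assoc] using hg
    obtain ⟨j, j', hjj', hmeet⟩ := hint y (fun j => (g j).1) fun j =>
      ⟨(hgy j).2.1, (hgy j).2.2 ▸ (hgy j).1⟩
    refine ⟨j, j', hjj', ?_⟩
    rwa [(hgy j).2.2, (hgy j').2.2, not_disjoint_iff_nonempty_inter]
  choose A_V hA_V using hcover
  refine ⟨A_V, card_le_mul_card_of_card_fiber_le Prod.snd fun y => (hA_V y).trans_eq ?_⟩
  congr 2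
  ext p
  simp only [mem_filter]
  grind

theorem exists_labelU_card_filter_le [DecidableEq β] [Nonempty α] (hsize : ∀ x ∈ X, #(Lx x) ≤ t)
    (A_V : V → β) :
    ∃ A_U : U → α, #{p ∈ E | p.1 ∈ X ∧ A_V p.2 ∈ (Lx p.1).image (φ p.1 p.2)} ≤
      t * #{p ∈ E | p.1 ∈ X ∧ φ p.1 p.2 (A_U p.1) = A_V p.2} := by
  classical
  choose A_U hA_U using fun x => {p ∈ E | p.1 = x}.exists_card_filter_exists_le_card_mul (Lx x)
    fun a p => φ x p.2 a = A_V p.2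
  refine ⟨A_U, card_le_mul_card_of_card_fiber_le Prod.fst fun x => ?_⟩
  by_cases hx : x ∈ X
  · calc #{p ∈ {p ∈ E | p.1 ∈ X ∧ A_V p.2 ∈ (Lx p.1).image (φ p.1 p.2)} | p.1 = x}
          = #{p ∈ {p ∈ E | p.1 = x} | ∃ a ∈ Lx x, φ x p.2 a = A_V p.2} := by
            congr 1; ext p; simp only [mem_filter, mem_image]; grind
      _ ≤ #(Lx x) * #{p ∈ {p ∈ E | p.1 = x} | φ x p.2 (A_U x) = A_V p.2} := hA_U x
      _ ≤ t * #{p ∈ {p ∈ E | p.1 = x} | φ x p.2 (A_U x) = A_V p.2} :=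
            Nat.mul_le_mul_right _ (hsize x hx)
      _ = t * #{p ∈ {p ∈ E | p.1 ∈ X ∧ φ p.1 p.2 (A_U p.1) = A_V p.2} | p.1 = x} := by
            congr 2; ext p; simp only [mem_filter]; grind
  · have hempty : {p ∈ {p ∈ E | p.1 ∈ X ∧ A_V p.2 ∈ (Lx p.1).image (φ p.1 p.2)} | p.1 = x} = ∅ :=
      filter_eq_empty_iff.2 fun p hp hpx => hx (hpx ▸ (mem_filter.1 hp).2.1)
    rw [hempty, card_empty]
    exact Nat.zero_le _

end LabelCover

theorem listDecoding_labeling_d_general {U V : Type*}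
    [DecidableEq U]
    (L R t d : ℕ) (hL : 0 < L) (hR : 0 < R)
    (E : Finset (U × V)) (φ : U → V → Fin L → Fin R)
    (X : Finset U) (Lx : U → Finset (Fin L))
    (hsize : ∀ x ∈ X, (Lx x).card ≤ t)
    (hint : ∀ y : V, ∀ g : Fin d → U,
      (∀ i, g i ∈ X ∧ (g i, y) ∈ E) →
      ∃ i i' : Fin d, i ≠ i' ∧
        (((Lx (g i)).image (φ (g i) y)) ∩
          ((Lx (g i')).image (φ (g i') y))).Nonempty) :
    ∃ (A_U : U → Fin L) (A_V : V → Fin R),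
      (E.filter (fun p => p.1 ∈ X)).card ≤
        t ^ 2 * (d - 1) * (E.filter (fun p =>
          p.1 ∈ X ∧ φ p.1 p.2 (A_U p.1) = A_V p.2)).card := by
  have : Nonempty (Fin L) := Fin.pos_iff_nonempty.1 hL
  have : Nonempty (Fin R) := Fin.pos_iff_nonempty.1 hR
  obtain ⟨A_V, hV⟩ := exists_labelV_card_filter_le hsize hint
  obtain ⟨A_U, hU⟩ := exists_labelU_card_filter_le hsize A_V
  refine ⟨A_U, A_V, hV.trans ((Nat.mul_le_mul_left _ hU).trans_eq ?_)⟩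
  ring

/-- **List-decoding to labeling (soundness of Lemma 5.2).** Given nonempty
candidate label lists `L_x` of size at most `t` for each `x ∈ X` such that
among any `d` neighbors (with repetition) of a common vertex `y` some two
projected lists intersect, there is an assignment satisfying at least a
`1/(t²(d−1))` fraction of the constraints touching `X`. -/
theorem listDecoding_labeling_d {U V : Type*} [Fintype U] [Fintype V]
    [DecidableEq U] [DecidableEq V]
    (L R t d : ℕ) (hL : 0 < L) (hR : 0 < R) (ht : 1 ≤ t) (hd : 2 ≤ d)
    (E : Finset (U × V)) (φ : U → V → Fin L → Fin R)
    (X : Finset U) (Lx : U → Finset (Fin L))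
    (hne : ∀ x ∈ X, (Lx x).Nonempty)
    (hsize : ∀ x ∈ X, (Lx x).card ≤ t)
    (hint : ∀ y : V, ∀ g : Fin d → U,
      (∀ i, g i ∈ X ∧ (g i, y) ∈ E) →
      ∃ i i' : Fin d, i ≠ i' ∧
        (((Lx (g i)).image (φ (g i) y)) ∩
          ((Lx (g i')).image (φ (g i') y))).Nonempty) :
    ∃ (A_U : U → Fin L) (A_V : V → Fin R),
      (E.filter (fun p => p.1 ∈ X)).card ≤
        t ^ 2 * (d - 1) * (E.filter (fun p =>
          p.1 ∈ X ∧ φ p.1 p.2 (A_U p.1) = A_V p.2)).card :=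
  listDecoding_labeling_d_general L R t d hL hR E φ X Lx hsize hint
end
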